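/- arXiv:2307.01674 — 6 statements merged into one kernel-verified Lean document; each statement's English description precedes it below -/
import Mathlib

section
/- Let $n \geq 1$ and let $X_n = \{-n, \dots, 0, \dots, n\} \subseteq \mathbb{Z}$ with multivalued addition given by: $a+b = \{a\}$ if $b \neq -a$ and $|b| \leq |a|$; $a+b = \{b\}$ if $b \neq -a$ and $|a| \leq |b|$; $a + (-a) = \{-|a|, \dots, 0, \dots, |a|\}$; and multiplication $a \cdot b = \mathrm{sgn}(ab)\max\{|a|,|b|\}$ for $a,b \neq 0$ and $a\cdot b = 0$ otherwise. Then $(X_n, +, \cdot, -, 0, 1)$ is a commutative multiring; in particular the multivalued addition is associative: $(a+b)+c = a+(b+c)$ for all $a,b,c \in X_n$. -/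
namespace IgrPaper

/-- Data of a multiring: a multivalued addition, a multiplication, a negation,
a zero and a one. -/
structure MulringData (α : Type*) where
  add : α → α → Set α
  mul : α → α → α
  neg : α → α
  zero : α
  one : α

namespace MulringData

variable {α β γ : Type*}

/-- Product of two subsets under the multiplication of `R`. -/
def mulSet (R : MulringData α) (A B : Set α) : Set α :=
  {z | ∃ x ∈ A, ∃ y ∈ B, z = R.mul x y}

/-- `R` is a (commutative) multiring on the subset `S`. -/
structure IsMultiringOn (R : MulringData α) (S : Set α) : Prop where
  zero_mem : R.zero ∈ S
  one_mem : R.one ∈ S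
  neg_mem : ∀ a ∈ S, R.neg a ∈ S
  add_sub : ∀ a ∈ S, ∀ b ∈ S, R.add a b ⊆ S
  mul_mem : ∀ a ∈ S, ∀ b ∈ S, R.mul a b ∈ S
  add_nonempty : ∀ a ∈ S, ∀ b ∈ S, (R.add a b).Nonempty
  add_comm : ∀ a ∈ S, ∀ b ∈ S, R.add a b = R.add b a
  zero_add : ∀ a ∈ S, ∀ b ∈ S, (a ∈ R.add R.zero b ↔ a = b)
  reverse : ∀ a ∈ S, ∀ b ∈ S, ∀ c ∈ S, c ∈ R.add a b → a ∈ R.add c (R.neg b)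
  add_assoc : ∀ a ∈ S, ∀ b ∈ S, ∀ c ∈ S,
    (⋃ x ∈ R.add a b, R.add x c) = ⋃ y ∈ R.add b c, R.add a y
  mul_comm : ∀ a ∈ S, ∀ b ∈ S, R.mul a b = R.mul b a
  mul_assoc : ∀ a ∈ S, ∀ b ∈ S, ∀ c ∈ S, R.mul (R.mul a b) c = R.mul a (R.mul b c)
  one_mul : ∀ a ∈ S, R.mul R.one a = a
  mul_zero : ∀ a ∈ S, R.mul a R.zero = R.zero
  distrib : ∀ a ∈ S, ∀ b ∈ S, ∀ c ∈ S, ∀ d ∈ S,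
    c ∈ R.add a b → R.mul c d ∈ R.add (R.mul a d) (R.mul b d)

/-- `R` is a hyperfield on the subset `S`. -/
structure IsHyperfieldOn (R : MulringData α) (S : Set α)
    extends IsMultiringOn R S : Prop where
  one_ne_zero : R.one ≠ R.zero
  exists_inv : ∀ a ∈ S, a ≠ R.zero → ∃ b ∈ S, R.mul a b = R.one
  distrib_eq : ∀ a ∈ S, ∀ b ∈ S, ∀ d ∈ S,
    (fun x => R.mul x d) '' (R.add a b) = R.add (R.mul a d) (R.mul b d)

abbrev IsMultiring (R : MulringData α) : Prop := R.IsMultiringOn Set.univ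
abbrev IsHyperfield (R : MulringData α) : Prop := R.IsHyperfieldOn Set.univ

/-- Hyperbolic on `S`: `1 - 1` is everything. -/
def IsHyperbolicOn (R : MulringData α) (S : Set α) : Prop :=
  R.add R.one (R.neg R.one) = S

abbrev IsHyperbolic (R : MulringData α) : Prop := R.IsHyperbolicOn Set.univ

/-- Pre-special hyperfield: hyperbolic hyperfield with `a² = 1` for nonzero `a`
and `(1-a)(1-a) ⊆ 1-a`. -/
def IsPreSpecialHF (R : MulringData α) : Prop :=
  R.IsHyperfield ∧ R.IsHyperbolic ∧ (∀ a, a ≠ R.zero → R.mul a a = R.one) ∧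
    ∀ a, R.mulSet (R.add R.one (R.neg a)) (R.add R.one (R.neg a)) ⊆ R.add R.one (R.neg a)

/-- Morphism of multirings/hyperfields, relative to subsets. -/
structure IsHFMorphismOn (R : MulringData α) (S : Set α) (Q : MulringData β) (T : Set β)
    (f : α → β) : Prop where
  maps_to : ∀ a ∈ S, f a ∈ T
  map_zero : f R.zero = Q.zero
  map_one : f R.one = Q.one
  map_neg : ∀ a ∈ S, f (R.neg a) = Q.neg (f a)
  map_mul : ∀ a ∈ S, ∀ b ∈ S, f (R.mul a b) = Q.mul (f a) (f b)
  map_add : ∀ a ∈ S, ∀ b ∈ S, ∀ c ∈ S, c ∈ R.add a b → f c ∈ Q.add (f a) (f b)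

abbrev IsHFMorphism (R : MulringData α) (Q : MulringData β) (f : α → β) : Prop :=
  IsHFMorphismOn R Set.univ Q Set.univ f

end MulringData
end IgrPaper

namespace IgrPaper
open MulringData

/-- The multivalued addition of the kaleidoscope `Xₙ`. -/
def kAdd (a b : ℤ) : Set ℤ :=
  if b = -a then {c | |c| ≤ |a|} else if |b| ≤ |a| then {a} else {b}

/-- The multiplication of the kaleidoscope: `a ⬝ b = sgn(ab) max(|a|,|b|)`
for `a, b ≠ 0`, and `0` otherwise. -/
def kMul (a b : ℤ) : ℤ :=
  if a = 0 ∨ b = 0 then 0 else (a * b).sign * max |a| |b|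

/-- The kaleidoscope data. -/
def kaleidData : MulringData ℤ where
  add := kAdd
  mul := kMul
  neg := fun a => -a
  zero := 0
  one := 1

set_option maxHeartbeats 1600000

/-! ### Auxiliary lemmas about `kAdd` -/

lemma mem_kAdd {a b z : ℤ} : z ∈ kAdd a b ↔
    (b = -a ∧ |z| ≤ |a|) ∨ (b ≠ -a ∧ |b| ≤ |a| ∧ z = a) ∨ (b ≠ -a ∧ |a| < |b| ∧ z = b) := by
  unfold kAdd
  split_ifs with h1 h2 <;>
    simp only [Set.mem_setOf_eq, Set.mem_singleton_iff] <;>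
    constructor <;> intro h <;>
    simp only [Int.abs_eq_natAbs, and_true, true_and, or_true, true_or, ne_eq] at h h1 ⊢ <;>
    first
      | omega
      | (simp only [Int.abs_eq_natAbs, and_true, true_and, or_true, true_or, ne_eq] at h2
         omega)

/-- Symmetric description of membership in a triple sum. -/
lemma mem_triple (a b c z : ℤ) :
    z ∈ ⋃ x ∈ kAdd a b, kAdd x c ↔
      (((a = -b ∧ |c| ≤ |a|) ∨ (a = -c ∧ |b| ≤ |a|) ∨ (b = -c ∧ |a| ≤ |b|)) ∧
        |z| ≤ max |a| (max |b| |c|)) ∨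
      (¬((a = -b ∧ |c| ≤ |a|) ∨ (a = -c ∧ |b| ≤ |a|) ∨ (b = -c ∧ |a| ≤ |b|)) ∧
        |z| = max |a| (max |b| |c|) ∧ (z = a ∨ z = b ∨ z = c)) := by
  constructor
  · intro h
    simp only [Set.mem_iUnion, exists_prop] at h
    obtain ⟨x, hx, hz⟩ := h
    rw [mem_kAdd] at hx hz
    simp only [Int.abs_eq_natAbs, ne_eq] at hx hz ⊢
    rcases hx with ⟨hb, hxa⟩ | ⟨hb, hba, rfl⟩ | ⟨hb, hba, rfl⟩ <;>
      rcases hz with ⟨hc, hzx⟩ | ⟨hc, hcx, rfl⟩ | ⟨hc, hcx, rfl⟩ <;>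
      omega
  · have key : ∀ x, x ∈ kAdd a b → z ∈ kAdd x c → z ∈ ⋃ x ∈ kAdd a b, kAdd x c :=
      fun x hx hz => Set.mem_biUnion hx hz
    intro h
    rcases h with ⟨hC, hz⟩ | ⟨hC, hz, hzeq⟩
    · rcases hC with ⟨h1, h2⟩ | ⟨h1, h2⟩ | ⟨h1, h2⟩
      · by_cases hlt : |c| < |z|
        · refine key z ?_ ?_ <;> rw [mem_kAdd] <;>
            simp only [Int.abs_eq_natAbs, and_true, true_and, or_true, true_or,
              ne_eq] at hz hlt h2 ⊢ <;> omega
        · refine key (-c) ?_ ?_ <;> rw [mem_kAdd] <;>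
            simp only [Int.abs_eq_natAbs, and_true, true_and, or_true, true_or,
              ne_eq] at hz hlt h2 ⊢ <;> omega
      · refine key a ?_ ?_ <;> rw [mem_kAdd] <;>
          simp only [Int.abs_eq_natAbs, and_true, true_and, or_true, true_or,
            ne_eq] at hz h2 ⊢ <;> omega
      · refine key b ?_ ?_ <;> rw [mem_kAdd] <;>
          simp only [Int.abs_eq_natAbs, and_true, true_and, or_true, true_or,
            ne_eq] at hz h2 ⊢ <;> omega
    · simp only [Int.abs_eq_natAbs, ne_eq] at hC hz
      rcases hzeq with rfl | rfl | rfl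
      · refine key z ?_ ?_ <;> rw [mem_kAdd] <;>
          simp only [Int.abs_eq_natAbs, and_true, true_and, or_true, true_or,
            ne_eq] at hz ⊢ <;> omega
      · refine key z ?_ ?_ <;> rw [mem_kAdd] <;>
          simp only [Int.abs_eq_natAbs, and_true, true_and, or_true, true_or,
            ne_eq] at hz ⊢ <;> omega
      · by_cases hba : b = -a ∨ |b| ≤ |a|
        · refine key a ?_ ?_ <;> rw [mem_kAdd] <;>
            simp only [Int.abs_eq_natAbs, and_true, true_and, or_true, true_or,
              ne_eq] at hz hba hC ⊢ <;> omega
        · refine key b ?_ ?_ <;> rw [mem_kAdd] <;>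
            simp only [Int.abs_eq_natAbs, and_true, true_and, or_true, true_or,
              ne_eq] at hz hba hC ⊢ <;> omega

lemma kAdd_comm (a b : ℤ) : kAdd a b = kAdd b a := by
  ext z
  rw [mem_kAdd, mem_kAdd]
  simp only [Int.abs_eq_natAbs, ne_eq]
  omega

lemma kAdd_assoc (a b c : ℤ) :
    (⋃ x ∈ kAdd a b, kAdd x c) = ⋃ y ∈ kAdd b c, kAdd a y := by
  have h : (⋃ y ∈ kAdd b c, kAdd a y) = ⋃ y ∈ kAdd b c, kAdd y a :=
    Set.iUnion₂_congr fun y _ => kAdd_comm a y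
  rw [h]
  ext z
  rw [mem_triple, mem_triple]
  have hC : ((a = -b ∧ |c| ≤ |a|) ∨ (a = -c ∧ |b| ≤ |a|) ∨ (b = -c ∧ |a| ≤ |b|)) ↔
      ((b = -c ∧ |a| ≤ |b|) ∨ (b = -a ∧ |c| ≤ |b|) ∨ (c = -a ∧ |b| ≤ |c|)) := by
    simp only [Int.abs_eq_natAbs]; omega
  have hm : max |a| (max |b| |c|) = max |b| (max |c| |a|) := by
    simp only [Int.abs_eq_natAbs]; omega
  rw [hC, hm]
  constructor <;> rintro (⟨h1, h2⟩ | ⟨h1, h2, h3⟩) <;>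
    [exact Or.inl ⟨h1, h2⟩; exact Or.inr ⟨h1, h2, by tauto⟩;
     exact Or.inl ⟨h1, h2⟩; exact Or.inr ⟨h1, h2, by tauto⟩]

/-! ### Auxiliary lemmas about `kMul` -/

lemma kMul_zero_left (b : ℤ) : kMul 0 b = 0 := if_pos (Or.inl rfl)
lemma kMul_zero_right (a : ℤ) : kMul a 0 = 0 := if_pos (Or.inr rfl)

lemma abs_sign' (m : ℤ) (h : m ≠ 0) : |m.sign| = 1 := by
  rcases h.lt_or_gt with h1 | h1
  · rw [Int.sign_eq_neg_one_iff_neg.mpr h1]; rfl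
  · rw [Int.sign_eq_one_iff_pos.mpr h1]; rfl

lemma kMul_abs {a b : ℤ} (ha : a ≠ 0) (hb : b ≠ 0) : |kMul a b| = max |a| |b| := by
  have hm : (0:ℤ) < max |a| |b| := lt_max_of_lt_left (abs_pos.mpr ha)
  rw [kMul, if_neg (by tauto), abs_mul, abs_sign' _ (mul_ne_zero ha hb), one_mul,
    abs_of_pos hm]

lemma kMul_ne_zero {a b : ℤ} (ha : a ≠ 0) (hb : b ≠ 0) : kMul a b ≠ 0 := by
  intro h
  have h1 := kMul_abs ha hb
  rw [h, abs_zero] at h1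
  have h2 : (0:ℤ) < |a| := abs_pos.mpr ha
  have h3 := le_max_left |a| |b|
  omega

lemma kMul_pos_iff {a b : ℤ} (ha : a ≠ 0) (hb : b ≠ 0) :
    0 < kMul a b ↔ (0 < a ↔ 0 < b) := by
  have hm : (0:ℤ) < max |a| |b| := lt_max_of_lt_left (abs_pos.mpr ha)
  rw [kMul, if_neg (by tauto)]
  rcases ha.lt_or_gt with h1 | h1 <;> rcases hb.lt_or_gt with h2 | h2
  · rw [Int.sign_eq_one_iff_pos.mpr (mul_pos_of_neg_of_neg h1 h2), one_mul]
    constructor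
    · intro _; constructor <;> intro h3 <;> omega
    · intro _; exact hm
  · rw [Int.sign_eq_neg_one_iff_neg.mpr (mul_neg_of_neg_of_pos h1 h2)]
    constructor <;> intro h3 <;> omega
  · rw [Int.sign_eq_neg_one_iff_neg.mpr (mul_neg_of_pos_of_neg h1 h2)]
    constructor <;> intro h3 <;> omega
  · rw [Int.sign_eq_one_iff_pos.mpr (mul_pos h1 h2), one_mul]
    constructor
    · intro _; constructor <;> intro h3 <;> omega
    · intro _; exact hm

lemma int_eq_of (x y : ℤ) (h1 : |x| = |y|) (h2 : 0 < x ↔ 0 < y) : x = y := by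
  simp only [Int.abs_eq_natAbs] at h1; omega

lemma kMul_comm (a b : ℤ) : kMul a b = kMul b a := by
  by_cases ha : a = 0; · rw [ha, kMul_zero_left, kMul_zero_right]
  by_cases hb : b = 0; · rw [hb, kMul_zero_left, kMul_zero_right]
  exact int_eq_of _ _ (by rw [kMul_abs ha hb, kMul_abs hb ha, max_comm])
    (by rw [kMul_pos_iff ha hb, kMul_pos_iff hb ha]; tauto)

lemma kMul_assoc (a b c : ℤ) : kMul (kMul a b) c = kMul a (kMul b c) := by
  by_cases ha : a = 0
  · simp [ha, kMul_zero_left, kMul_zero_right]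
  by_cases hb : b = 0
  · simp [hb, kMul_zero_left, kMul_zero_right]
  by_cases hc : c = 0
  · simp [hc, kMul_zero_left, kMul_zero_right]
  have hA := kMul_ne_zero ha hb
  have hB := kMul_ne_zero hb hc
  refine int_eq_of _ _ ?_ ?_
  · rw [kMul_abs hA hc, kMul_abs ha hB, kMul_abs ha hb, kMul_abs hb hc, max_assoc]
  · rw [kMul_pos_iff hA hc, kMul_pos_iff ha hB, kMul_pos_iff ha hb, kMul_pos_iff hb hc]
    tauto

lemma kMul_one_left (a : ℤ) : kMul 1 a = a := by
  by_cases ha : a = 0; · rw [ha, kMul_zero_right]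
  refine int_eq_of _ _ ?_ ?_
  · rw [kMul_abs one_ne_zero ha, abs_one, max_eq_right (Int.one_le_abs ha)]
  · rw [kMul_pos_iff one_ne_zero ha]
    simp

lemma kMul_neg_left (a b : ℤ) : kMul (-a) b = -(kMul a b) := by
  by_cases ha : a = 0; · rw [ha, neg_zero, kMul_zero_left, neg_zero]
  by_cases hb : b = 0; · rw [hb, kMul_zero_right, kMul_zero_right, neg_zero]
  rw [kMul, kMul, if_neg (by simp [ha, hb]), if_neg (by simp [ha, hb]),
    neg_mul, Int.sign_neg, abs_neg, neg_mul]

lemma kMul_abs_le {a c : ℤ} (d : ℤ) (h : |c| ≤ |a|) : |kMul c d| ≤ |kMul a d| := by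
  by_cases hc : c = 0
  · rw [hc, kMul_zero_left, abs_zero]; exact abs_nonneg _
  by_cases hd : d = 0
  · rw [hd, kMul_zero_right, kMul_zero_right]
  have ha : a ≠ 0 := abs_pos.mp (lt_of_lt_of_le (abs_pos.mpr hc) h)
  rw [kMul_abs hc hd, kMul_abs ha hd]
  exact max_le_max h le_rfl

/-- The kaleidoscope `Xₙ = {-n, …, 0, …, n}` is a commutative multiring; in
particular its multivalued addition is associative. -/
theorem stmt0 (n : ℕ) (hn : 1 ≤ n) :
    kaleidData.IsMultiringOn {x : ℤ | |x| ≤ (n : ℤ)} ∧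
    ∀ a ∈ {x : ℤ | |x| ≤ (n : ℤ)}, ∀ b ∈ {x : ℤ | |x| ≤ (n : ℤ)},
      ∀ c ∈ {x : ℤ | |x| ≤ (n : ℤ)},
        (⋃ x ∈ kAdd a b, kAdd x c) = ⋃ y ∈ kAdd b c, kAdd a y := by
  have hn' : (1 : ℤ) ≤ (n : ℤ) := by exact_mod_cast hn
  refine ⟨?_, fun a _ b _ c _ => kAdd_assoc a b c⟩
  constructor
  case zero_mem =>
    show |(0:ℤ)| ≤ (n:ℤ)
    rw [abs_zero]; omega
  case one_mem =>
    show |(1:ℤ)| ≤ (n:ℤ)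
    rw [abs_one]; omega
  case neg_mem =>
    intro a ha
    show |(-a)| ≤ (n:ℤ)
    rw [abs_neg]; exact ha
  case add_sub =>
    intro a ha b hb z hz
    simp only [Set.mem_setOf_eq] at ha hb ⊢
    rw [show kaleidData.add a b = kAdd a b from rfl, mem_kAdd] at hz
    simp only [Int.abs_eq_natAbs, ne_eq] at ha hb hz ⊢
    omega
  case mul_mem =>
    intro a ha b hb
    simp only [Set.mem_setOf_eq] at ha hb ⊢
    show |kMul a b| ≤ (n:ℤ)
    by_cases ha0 : a = 0
    · rw [ha0, kMul_zero_left, abs_zero]; omega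
    by_cases hb0 : b = 0
    · rw [hb0, kMul_zero_right, abs_zero]; omega
    rw [kMul_abs ha0 hb0]
    exact max_le ha hb
  case add_nonempty =>
    intro a _ b _
    by_cases h : |a| < |b|
    · refine ⟨b, ?_⟩
      rw [show kaleidData.add a b = kAdd a b from rfl, mem_kAdd]
      simp only [Int.abs_eq_natAbs, and_true, true_and, or_true, true_or, ne_eq] at h ⊢
      omega
    · refine ⟨a, ?_⟩
      rw [show kaleidData.add a b = kAdd a b from rfl, mem_kAdd]
      simp only [Int.abs_eq_natAbs, and_true, true_and, or_true, true_or, ne_eq] at h ⊢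
      omega
  case add_comm =>
    intro a _ b _
    exact kAdd_comm a b
  case zero_add =>
    intro a _ b _
    rw [show kaleidData.add kaleidData.zero b = kAdd 0 b from rfl, mem_kAdd]
    simp only [Int.abs_eq_natAbs, ne_eq]
    omega
  case reverse =>
    intro a _ b _ c _ hc
    rw [show kaleidData.add a b = kAdd a b from rfl, mem_kAdd] at hc
    rw [show kaleidData.add c (kaleidData.neg b) = kAdd c (-b) from rfl, mem_kAdd]
    simp only [Int.abs_eq_natAbs, and_true, true_and, or_true, true_or, ne_eq] at hc ⊢
    omega
  case add_assoc =>
    intro a _ b _ c _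
    exact kAdd_assoc a b c
  case mul_comm =>
    intro a _ b _
    exact kMul_comm a b
  case mul_assoc =>
    intro a _ b _ c _
    exact kMul_assoc a b c
  case one_mul =>
    intro a _
    exact kMul_one_left a
  case mul_zero =>
    intro a _
    exact kMul_zero_right a
  case distrib =>
    intro a _ b _ c _ d _ hc
    rw [show kaleidData.add a b = kAdd a b from rfl, mem_kAdd] at hc
    rw [show kaleidData.add (kaleidData.mul a d) (kaleidData.mul b d) =
      kAdd (kMul a d) (kMul b d) from rfl, mem_kAdd]
    simp only [show kaleidData.mul = kMul from rfl]
    rcases hc with ⟨hb, hca⟩ | ⟨hb, hba, hce⟩ | ⟨hb, hba, hce⟩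
    · exact Or.inl ⟨by rw [hb, kMul_neg_left], kMul_abs_le d hca⟩
    · by_cases he : kMul b d = -(kMul a d)
      · exact Or.inl ⟨he, by rw [hce]⟩
      · exact Or.inr (Or.inl ⟨he, kMul_abs_le d hba, by rw [hce]⟩)
    · by_cases he : kMul b d = -(kMul a d)
      · refine Or.inl ⟨he, le_of_eq ?_⟩
        rw [hce, he, abs_neg]
      · rcases lt_or_eq_of_le (kMul_abs_le d hba.le) with h1 | h1
        · exact Or.inr (Or.inr ⟨he, h1, by rw [hce]⟩)
        · have hEq : kMul b d = kMul a d := by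
            simp only [Int.abs_eq_natAbs] at h1
            omega
          exact Or.inr (Or.inl ⟨he, le_of_eq h1.symm, by rw [hce, hEq]⟩)

end IgrPaper
end

section
/- Let $F_1$ and $F_2$ be hyperbolic hyperfields. Define $F_1 \times_h F_2 := (\dot F_1 \times \dot F_2) \cup \{(0,0)\}$ with componentwise multiplication, componentwise negation, and multivalued addition $(a,b)+(c,d) := \{(e,f) \in F_1 \times F_2 : e \in a+c, f \in b+d\} \cap (F_1 \times_h F_2)$. Then $F_1 \times_h F_2$ is a hyperbolic hyperfield, and together with the two coordinate projections it satisfies the universal property of the product in the category of hyperbolic hyperfields. -/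
namespace IgrPaper
open MulringData

variable {α β : Type*}

/-- The underlying set of the product of hyperbolic hyperfields:
`(Ḟ₁ × Ḟ₂) ∪ {(0,0)}`. -/
def prodS (R1 : MulringData α) (R2 : MulringData β) : Set (α × β) :=
  {x | (x.1 ≠ R1.zero ∧ x.2 ≠ R2.zero) ∨ x = (R1.zero, R2.zero)}

/-- The product data `F₁ ×ₕ F₂`: componentwise operations, with the multivalued
sum cut down to `(Ḟ₁ × Ḟ₂) ∪ {(0,0)}`. -/
def prodData (R1 : MulringData α) (R2 : MulringData β) : MulringData (α × β) where
  add := fun p q =>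
    {e | e.1 ∈ R1.add p.1 q.1 ∧ e.2 ∈ R2.add p.2 q.2} ∩ prodS R1 R2
  mul := fun p q => (R1.mul p.1 q.1, R2.mul p.2 q.2)
  neg := fun p => (R1.neg p.1, R2.neg p.2)
  zero := (R1.zero, R2.zero)
  one := (R1.one, R2.one)

section Aux

variable {R : MulringData α}

lemma hf_zero_add (h : R.IsMultiring) (a : α) : a ∈ R.add R.zero a :=
  (h.zero_add a trivial a trivial).mpr rfl

lemma hf_zero_mem_add_neg (h : R.IsMultiring) (a : α) : R.zero ∈ R.add a (R.neg a) :=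
  h.reverse R.zero trivial a trivial a trivial (hf_zero_add h a)

lemma hf_neg_neg (h : R.IsMultiring) (a : α) : R.neg (R.neg a) = a :=
  ((h.zero_add a trivial (R.neg (R.neg a)) trivial).mp
    (h.reverse a trivial (R.neg a) trivial R.zero trivial (hf_zero_mem_add_neg h a))).symm

lemma hf_neg_zero (h : R.IsMultiring) : R.neg R.zero = R.zero :=
  ((h.zero_add R.zero trivial (R.neg R.zero) trivial).mp (hf_zero_mem_add_neg h R.zero)).symm

lemma hf_neg_eq_zero (h : R.IsMultiring) {a : α} : R.neg a = R.zero ↔ a = R.zero := by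
  constructor
  · intro ha
    have := hf_neg_neg h a
    rw [ha, hf_neg_zero h] at this
    exact this.symm
  · intro ha; rw [ha]; exact hf_neg_zero h

lemma hf_zero_mul (h : R.IsMultiring) (a : α) : R.mul R.zero a = R.zero := by
  rw [h.mul_comm R.zero trivial a trivial]; exact h.mul_zero a trivial

lemma hf_mul_one (h : R.IsMultiring) (a : α) : R.mul a R.one = a := by
  rw [h.mul_comm a trivial R.one trivial]; exact h.one_mul a trivial

lemma hf_add_zero_mem (h : R.IsMultiring) (a : α) : a ∈ R.add a R.zero := by
  rw [h.add_comm a trivial R.zero trivial]; exact hf_zero_add h a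

lemma hf_eq_neg_of_zero_mem (h : R.IsMultiring) {a b : α}
    (h0 : R.zero ∈ R.add a b) : b = R.neg a := by
  have h1 := h.reverse a trivial b trivial R.zero trivial h0
  have h2 := (h.zero_add a trivial (R.neg b) trivial).mp h1
  rw [h2]; exact (hf_neg_neg h b).symm

lemma hf_mul_ne_zero (h : R.IsHyperfield) {a b : α}
    (ha : a ≠ R.zero) (hb : b ≠ R.zero) : R.mul a b ≠ R.zero := by
  obtain ⟨c, -, hc⟩ := h.exists_inv b trivial hb
  intro he
  apply ha
  have key : R.mul (R.mul a b) c = a := by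
    rw [h.mul_assoc a trivial b trivial c trivial, hc, hf_mul_one h.toIsMultiringOn a]
  rw [he, hf_zero_mul h.toIsMultiringOn c] at key
  exact key.symm

lemma hf_mul_eq_zero (h : R.IsHyperfield) {a b : α} :
    R.mul a b = R.zero ↔ a = R.zero ∨ b = R.zero := by
  constructor
  · intro hab
    by_contra hc
    push_neg at hc
    exact hf_mul_ne_zero h hc.1 hc.2 hab
  · rintro (ha | hb)
    · rw [ha]; exact hf_zero_mul h.toIsMultiringOn b
    · rw [hb]; exact h.mul_zero a trivial

lemma hf_neg_one_mul (h : R.IsHyperfield) (a : α) :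
    R.mul (R.neg R.one) a = R.neg a := by
  have h0 : R.zero ∈ R.add R.one (R.neg R.one) := hf_zero_mem_add_neg h.toIsMultiringOn R.one
  have hd := h.distrib R.one trivial (R.neg R.one) trivial R.zero trivial a trivial h0
  rw [hf_zero_mul h.toIsMultiringOn a, h.one_mul a trivial] at hd
  exact hf_eq_neg_of_zero_mem h.toIsMultiringOn hd

lemma hf_add_neg_univ (h : R.IsHyperfield) (hbl : R.IsHyperbolic) {a : α}
    (ha : a ≠ R.zero) : R.add a (R.neg a) = Set.univ := by
  have key := h.distrib_eq R.one trivial (R.neg R.one) trivial a trivial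
  have hbl' : R.add R.one (R.neg R.one) = Set.univ := hbl
  rw [hbl', h.one_mul a trivial, hf_neg_one_mul h a] at key
  rw [← key]
  obtain ⟨b, -, hab⟩ := h.exists_inv a trivial ha
  ext y
  simp only [Set.image_univ, Set.mem_range, Set.mem_univ, iff_true]
  exact ⟨R.mul y b, by rw [h.mul_assoc y trivial b trivial a trivial,
    h.mul_comm b trivial a trivial, hab, hf_mul_one h.toIsMultiringOn y]⟩

lemma hf_exists_ne_zero_mem_add (h : R.IsHyperfield) (hbl : R.IsHyperbolic) {a b : α}
    (ha : a ≠ R.zero) (_hb : b ≠ R.zero) : ∃ e ∈ R.add a b, e ≠ R.zero := by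
  by_contra hc
  push_neg at hc
  obtain ⟨e, he⟩ := h.add_nonempty a trivial b trivial
  have he0 := hc e he
  rw [he0] at he
  have hba := hf_eq_neg_of_zero_mem h.toIsMultiringOn he
  have hU : R.add a b = Set.univ := by rw [hba]; exact hf_add_neg_univ h hbl ha
  have h1 : R.one ∈ R.add a b := by rw [hU]; trivial
  exact h.one_ne_zero (hc R.one h1)

lemma hf_mem_add_one_self (h : R.IsHyperfield) (hbl : R.IsHyperbolic) {c : α}
    (hc : c ≠ R.zero) : c ∈ R.add R.one c := by
  have h1 : R.one ∈ R.add c (R.neg c) := by rw [hf_add_neg_univ h hbl hc]; trivial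
  have h2 := h.reverse c trivial (R.neg c) trivial R.one trivial h1
  rwa [hf_neg_neg h.toIsMultiringOn c] at h2

lemma hf_morph_ne_zero {Q : MulringData β} (hR : R.IsHyperfield) (hQ : Q.IsMultiring)
    (hQ1 : Q.one ≠ Q.zero) {f : α → β} (hf : IsHFMorphism R Q f) {a : α}
    (ha : a ≠ R.zero) : f a ≠ Q.zero := by
  obtain ⟨b, -, hab⟩ := hR.exists_inv a trivial ha
  intro h0
  have key := hf.map_mul a trivial b trivial
  rw [hab, hf.map_one, h0, hf_zero_mul hQ (f b)] at key
  exact hQ1 key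

lemma mem_prodS_iff {R1 : MulringData α} {R2 : MulringData β} (p : α × β) :
    p ∈ prodS R1 R2 ↔ (p.1 = R1.zero ↔ p.2 = R2.zero) := by
  constructor
  · rintro (⟨ha, hb⟩ | hp)
    · exact iff_of_false ha hb
    · rw [hp]; exact iff_of_true rfl rfl
  · intro h
    by_cases hp : p.1 = R1.zero
    · right; rw [Prod.ext_iff]; exact ⟨hp, h.mp hp⟩
    · left; exact ⟨hp, fun h2 => hp (h.mpr h2)⟩

lemma mem_prod_add {R1 : MulringData α} {R2 : MulringData β} {p q e : α × β} :
    e ∈ (prodData R1 R2).add p q ↔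
      (e.1 ∈ R1.add p.1 q.1 ∧ e.2 ∈ R2.add p.2 q.2) ∧ e ∈ prodS R1 R2 :=
  Iff.rfl

/-- If in the componentwise situation the first witness is zero but the second is not,
we can replace the first witness by a nonzero one. -/
lemma fix_zero {R1 : MulringData α} {R2 : MulringData β}
    (h1 : R1.IsHyperfield) (h1b : R1.IsHyperbolic) (h2m : R2.IsMultiring)
    {A1 B1 C1 x1 z1 : α} {A2 B2 C2 x2 z2 : β}
    (hA : A1 = R1.zero ↔ A2 = R2.zero)
    (hB : B1 = R1.zero ↔ B2 = R2.zero)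
    (hC : C1 = R1.zero ↔ C2 = R2.zero)
    (hz : z1 = R1.zero ↔ z2 = R2.zero)
    (hx1 : x1 ∈ R1.add A1 B1) (hz1 : z1 ∈ R1.add x1 C1)
    (hx2 : x2 ∈ R2.add A2 B2) (hz2 : z2 ∈ R2.add x2 C2)
    (h10 : x1 = R1.zero) (h20 : x2 ≠ R2.zero) :
    ∃ x1', x1' ≠ R1.zero ∧ x1' ∈ R1.add A1 B1 ∧ z1 ∈ R1.add x1' C1 := by
  subst h10
  by_cases hA1 : A1 = R1.zero
  · exfalso
    rw [hA1] at hx1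
    have hB1 : B1 = R1.zero :=
      ((h1.zero_add R1.zero trivial B1 trivial).mp hx1).symm
    have hA2 : A2 = R2.zero := hA.mp hA1
    have hB2 : B2 = R2.zero := hB.mp hB1
    rw [hA2, hB2] at hx2
    have hx2' := (h2m.zero_add x2 trivial R2.zero trivial).mp
      (by rw [h2m.add_comm R2.zero trivial R2.zero trivial] at hx2; exact hx2)
    exact h20 hx2'
  · have hB1 : B1 = R1.neg A1 := hf_eq_neg_of_zero_mem h1.toIsMultiringOn hx1
    have hU : R1.add A1 B1 = Set.univ := by
      rw [hB1]; exact hf_add_neg_univ h1 h1b hA1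
    have hz1' : z1 = C1 := (h1.zero_add z1 trivial C1 trivial).mp hz1
    by_cases hC1 : C1 = R1.zero
    · exfalso
      have hz10 : z1 = R1.zero := hz1'.trans hC1
      have hz20 : z2 = R2.zero := hz.mp hz10
      have hC2 : C2 = R2.zero := hC.mp hC1
      rw [hz20, hC2, h2m.add_comm x2 trivial R2.zero trivial] at hz2
      have := (h2m.zero_add R2.zero trivial x2 trivial).mp hz2
      exact h20 this.symm
    · refine ⟨R1.one, h1.one_ne_zero, by rw [hU]; trivial, ?_⟩
      rw [hz1']
      exact hf_mem_add_one_self h1 h1b hC1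

/-- Fix a pair of witnesses so that they lie in the product set. -/
lemma fix_pair {R1 : MulringData α} {R2 : MulringData β}
    (h1 : R1.IsHyperfield) (h1b : R1.IsHyperbolic)
    (h2 : R2.IsHyperfield) (h2b : R2.IsHyperbolic)
    {A1 B1 C1 x1 z1 : α} {A2 B2 C2 x2 z2 : β}
    (hA : A1 = R1.zero ↔ A2 = R2.zero)
    (hB : B1 = R1.zero ↔ B2 = R2.zero)
    (hC : C1 = R1.zero ↔ C2 = R2.zero)
    (hz : z1 = R1.zero ↔ z2 = R2.zero)
    (hx1 : x1 ∈ R1.add A1 B1) (hz1 : z1 ∈ R1.add x1 C1)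
    (hx2 : x2 ∈ R2.add A2 B2) (hz2 : z2 ∈ R2.add x2 C2) :
    ∃ x1' x2', (x1' = R1.zero ↔ x2' = R2.zero) ∧
      x1' ∈ R1.add A1 B1 ∧ z1 ∈ R1.add x1' C1 ∧
      x2' ∈ R2.add A2 B2 ∧ z2 ∈ R2.add x2' C2 := by
  by_cases e1 : x1 = R1.zero <;> by_cases e2 : x2 = R2.zero
  · exact ⟨x1, x2, iff_of_true e1 e2, hx1, hz1, hx2, hz2⟩
  · obtain ⟨x1', hne, hm, hzm⟩ :=
      fix_zero h1 h1b h2.toIsMultiringOn hA hB hC hz hx1 hz1 hx2 hz2 e1 e2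
    exact ⟨x1', x2, iff_of_false hne e2, hm, hzm, hx2, hz2⟩
  · obtain ⟨x2', hne, hm, hzm⟩ :=
      fix_zero h2 h2b h1.toIsMultiringOn hA.symm hB.symm hC.symm hz.symm hx2 hz2 hx1 hz1 e2 e1
    exact ⟨x1, x2', iff_of_false e1 hne, hx1, hz1, hm, hzm⟩
  · exact ⟨x1, x2, iff_of_false e1 e2, hx1, hz1, hx2, hz2⟩

end Aux

/-- `F₁ ×ₕ F₂` is a hyperbolic hyperfield (on its underlying set), the two
projections are morphisms, and it satisfies the universal property of the
product in the category of hyperbolic hyperfields. -/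
theorem stmt2 (R1 : MulringData α) (R2 : MulringData β)
    (h1 : R1.IsHyperfield) (h1b : R1.IsHyperbolic)
    (h2 : R2.IsHyperfield) (h2b : R2.IsHyperbolic) :
    (prodData R1 R2).IsHyperfieldOn (prodS R1 R2) ∧
    (prodData R1 R2).IsHyperbolicOn (prodS R1 R2) ∧
    IsHFMorphismOn (prodData R1 R2) (prodS R1 R2) R1 Set.univ Prod.fst ∧
    IsHFMorphismOn (prodData R1 R2) (prodS R1 R2) R2 Set.univ Prod.snd ∧
    ∀ (γ : Type*) (F : MulringData γ), F.IsHyperfield → F.IsHyperbolic →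
      ∀ (p1 : γ → α) (p2 : γ → β),
        IsHFMorphism F R1 p1 → IsHFMorphism F R2 p2 →
        ∃! q : γ → α × β,
          IsHFMorphismOn F Set.univ (prodData R1 R2) (prodS R1 R2) q ∧
          ∀ x, (q x).1 = p1 x ∧ (q x).2 = p2 x := by
  -- multiplication preserves the product set
  have hmulS : ∀ p ∈ prodS R1 R2, ∀ q ∈ prodS R1 R2,
      (prodData R1 R2).mul p q ∈ prodS R1 R2 := by
    intro p hp q hq
    rw [mem_prodS_iff] at hp hq ⊢
    show R1.mul p.1 q.1 = R1.zero ↔ R2.mul p.2 q.2 = R2.zero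
    rw [hf_mul_eq_zero h1, hf_mul_eq_zero h2]
    tauto
  -- nonemptiness of sums
  have haddne : ∀ p ∈ prodS R1 R2, ∀ q ∈ prodS R1 R2,
      ((prodData R1 R2).add p q).Nonempty := by
    intro a ha b hb
    rw [mem_prodS_iff] at ha hb
    by_cases ha1 : a.1 = R1.zero
    · by_cases hb1 : b.1 = R1.zero
      · refine ⟨(R1.zero, R2.zero), mem_prod_add.mpr ⟨⟨?_, ?_⟩,
          (mem_prodS_iff _).mpr (iff_of_true rfl rfl)⟩⟩
        · rw [ha1, hb1]; exact hf_zero_add h1.toIsMultiringOn R1.zero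
        · rw [ha.mp ha1, hb.mp hb1]; exact hf_zero_add h2.toIsMultiringOn R2.zero
      · refine ⟨b, mem_prod_add.mpr ⟨⟨?_, ?_⟩, (mem_prodS_iff _).mpr hb⟩⟩
        · rw [ha1]; exact hf_zero_add h1.toIsMultiringOn b.1
        · rw [ha.mp ha1]; exact hf_zero_add h2.toIsMultiringOn b.2
    · by_cases hb1 : b.1 = R1.zero
      · refine ⟨a, mem_prod_add.mpr ⟨⟨?_, ?_⟩, (mem_prodS_iff _).mpr ha⟩⟩
        · rw [hb1]; exact hf_add_zero_mem h1.toIsMultiringOn a.1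
        · rw [hb.mp hb1]; exact hf_add_zero_mem h2.toIsMultiringOn a.2
      · have ha2 : a.2 ≠ R2.zero := fun h => ha1 (ha.mpr h)
        have hb2 : b.2 ≠ R2.zero := fun h => hb1 (hb.mpr h)
        obtain ⟨e1, he1, he1n⟩ := hf_exists_ne_zero_mem_add h1 h1b ha1 hb1
        obtain ⟨e2, he2, he2n⟩ := hf_exists_ne_zero_mem_add h2 h2b ha2 hb2
        exact ⟨(e1, e2), mem_prod_add.mpr ⟨⟨he1, he2⟩,
          (mem_prodS_iff _).mpr (iff_of_false he1n he2n)⟩⟩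
  have hmulring : (prodData R1 R2).IsMultiringOn (prodS R1 R2) :=
    { zero_mem := (mem_prodS_iff _).mpr (iff_of_true rfl rfl)
      one_mem := (mem_prodS_iff _).mpr (iff_of_false h1.one_ne_zero h2.one_ne_zero)
      neg_mem := fun a ha => by
        rw [mem_prodS_iff] at ha ⊢
        show R1.neg a.1 = R1.zero ↔ R2.neg a.2 = R2.zero
        rw [hf_neg_eq_zero h1.toIsMultiringOn, hf_neg_eq_zero h2.toIsMultiringOn]
        exact ha
      add_sub := fun a _ b _ e he => he.2
      mul_mem := hmulS
      add_nonempty := haddne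
      add_comm := fun a _ b _ => by
        ext e
        rw [mem_prod_add, mem_prod_add, h1.add_comm a.1 trivial b.1 trivial,
          h2.add_comm a.2 trivial b.2 trivial]
      zero_add := fun a ha b hb => by
        constructor
        · intro h
          obtain ⟨⟨hm1, hm2⟩, -⟩ := mem_prod_add.mp h
          exact Prod.ext_iff.mpr ⟨(h1.zero_add a.1 trivial b.1 trivial).mp hm1,
            (h2.zero_add a.2 trivial b.2 trivial).mp hm2⟩
        · intro h
          subst h
          exact mem_prod_add.mpr ⟨⟨hf_zero_add h1.toIsMultiringOn a.1,
            hf_zero_add h2.toIsMultiringOn a.2⟩, ha⟩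
      reverse := fun a ha b hb c hc h => by
        obtain ⟨⟨hc1, hc2⟩, -⟩ := mem_prod_add.mp h
        exact mem_prod_add.mpr ⟨⟨h1.reverse a.1 trivial b.1 trivial c.1 trivial hc1,
          h2.reverse a.2 trivial b.2 trivial c.2 trivial hc2⟩, ha⟩
      add_assoc := fun a ha b hb c hc => by
        rw [mem_prodS_iff] at ha hb hc
        ext z
        simp only [Set.mem_iUnion, exists_prop]
        constructor
        · rintro ⟨x, hx, hzx⟩
          obtain ⟨⟨hx1, hx2⟩, -⟩ := mem_prod_add.mp hx
          obtain ⟨⟨hz1, hz2⟩, hzS⟩ := mem_prod_add.mp hzx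
          have m1 : z.1 ∈ ⋃ y1 ∈ R1.add b.1 c.1, R1.add a.1 y1 := by
            rw [← h1.add_assoc a.1 trivial b.1 trivial c.1 trivial]
            exact Set.mem_biUnion hx1 hz1
          have m2 : z.2 ∈ ⋃ y2 ∈ R2.add b.2 c.2, R2.add a.2 y2 := by
            rw [← h2.add_assoc a.2 trivial b.2 trivial c.2 trivial]
            exact Set.mem_biUnion hx2 hz2
          simp only [Set.mem_iUnion, exists_prop] at m1 m2
          obtain ⟨y1, hy1, hzy1⟩ := m1
          obtain ⟨y2, hy2, hzy2⟩ := m2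
          rw [h1.add_comm a.1 trivial y1 trivial] at hzy1
          rw [h2.add_comm a.2 trivial y2 trivial] at hzy2
          have hzff := (mem_prodS_iff z).mp hzS
          obtain ⟨y1', y2', hy', hm1, hzm1, hm2, hzm2⟩ :=
            fix_pair h1 h1b h2 h2b hb hc ha hzff hy1 hzy1 hy2 hzy2
          refine ⟨(y1', y2'), mem_prod_add.mpr ⟨⟨hm1, hm2⟩, (mem_prodS_iff _).mpr hy'⟩,
            mem_prod_add.mpr ⟨⟨?_, ?_⟩, hzS⟩⟩
          · rw [h1.add_comm a.1 trivial y1' trivial]; exact hzm1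
          · rw [h2.add_comm a.2 trivial y2' trivial]; exact hzm2
        · rintro ⟨y, hy, hzy⟩
          obtain ⟨⟨hy1, hy2⟩, -⟩ := mem_prod_add.mp hy
          obtain ⟨⟨hz1, hz2⟩, hzS⟩ := mem_prod_add.mp hzy
          have m1 : z.1 ∈ ⋃ x1 ∈ R1.add a.1 b.1, R1.add x1 c.1 := by
            rw [h1.add_assoc a.1 trivial b.1 trivial c.1 trivial]
            exact Set.mem_biUnion hy1 hz1
          have m2 : z.2 ∈ ⋃ x2 ∈ R2.add a.2 b.2, R2.add x2 c.2 := by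
            rw [h2.add_assoc a.2 trivial b.2 trivial c.2 trivial]
            exact Set.mem_biUnion hy2 hz2
          simp only [Set.mem_iUnion, exists_prop] at m1 m2
          obtain ⟨x1, hx1, hzx1⟩ := m1
          obtain ⟨x2, hx2, hzx2⟩ := m2
          have hzff := (mem_prodS_iff z).mp hzS
          obtain ⟨x1', x2', hx', hm1, hzm1, hm2, hzm2⟩ :=
            fix_pair h1 h1b h2 h2b ha hb hc hzff hx1 hzx1 hx2 hzx2
          exact ⟨(x1', x2'), mem_prod_add.mpr ⟨⟨hm1, hm2⟩, (mem_prodS_iff _).mpr hx'⟩,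
            mem_prod_add.mpr ⟨⟨hzm1, hzm2⟩, hzS⟩⟩
      mul_comm := fun a _ b _ => Prod.ext_iff.mpr
        ⟨h1.mul_comm a.1 trivial b.1 trivial, h2.mul_comm a.2 trivial b.2 trivial⟩
      mul_assoc := fun a _ b _ c _ => Prod.ext_iff.mpr
        ⟨h1.mul_assoc a.1 trivial b.1 trivial c.1 trivial,
         h2.mul_assoc a.2 trivial b.2 trivial c.2 trivial⟩
      one_mul := fun a _ => Prod.ext_iff.mpr
        ⟨h1.one_mul a.1 trivial, h2.one_mul a.2 trivial⟩
      mul_zero := fun a _ => Prod.ext_iff.mpr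
        ⟨h1.mul_zero a.1 trivial, h2.mul_zero a.2 trivial⟩
      distrib := fun a ha b hb c hc d hd h => by
        obtain ⟨⟨hc1, hc2⟩, -⟩ := mem_prod_add.mp h
        exact mem_prod_add.mpr
          ⟨⟨h1.distrib a.1 trivial b.1 trivial c.1 trivial d.1 trivial hc1,
            h2.distrib a.2 trivial b.2 trivial c.2 trivial d.2 trivial hc2⟩,
            hmulS c hc d hd⟩ }
  have hhf : (prodData R1 R2).IsHyperfieldOn (prodS R1 R2) :=
    { toIsMultiringOn := hmulring
      one_ne_zero := fun h => h1.one_ne_zero (congrArg Prod.fst h)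
      exists_inv := fun a ha h0 => by
        rw [mem_prodS_iff] at ha
        have ha1 : a.1 ≠ R1.zero := fun h => h0 (Prod.ext_iff.mpr ⟨h, ha.mp h⟩)
        have ha2 : a.2 ≠ R2.zero := fun h => ha1 (ha.mpr h)
        obtain ⟨b1', -, hb1⟩ := h1.exists_inv a.1 trivial ha1
        obtain ⟨b2', -, hb2⟩ := h2.exists_inv a.2 trivial ha2
        have hb1n : b1' ≠ R1.zero := by
          intro h
          rw [h, h1.mul_zero a.1 trivial] at hb1
          exact h1.one_ne_zero hb1.symm
        have hb2n : b2' ≠ R2.zero := by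
          intro h
          rw [h, h2.mul_zero a.2 trivial] at hb2
          exact h2.one_ne_zero hb2.symm
        exact ⟨(b1', b2'), (mem_prodS_iff _).mpr (iff_of_false hb1n hb2n),
          Prod.ext_iff.mpr ⟨hb1, hb2⟩⟩
      distrib_eq := fun a ha b hb d hd => by
        ext z
        constructor
        · rintro ⟨x, hx, rfl⟩
          obtain ⟨⟨hx1, hx2⟩, hxS⟩ := mem_prod_add.mp hx
          exact mem_prod_add.mpr
            ⟨⟨h1.distrib a.1 trivial b.1 trivial x.1 trivial d.1 trivial hx1,
              h2.distrib a.2 trivial b.2 trivial x.2 trivial d.2 trivial hx2⟩,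
              hmulS x hxS d hd⟩
        · intro hz
          obtain ⟨⟨hz1, hz2⟩, hzS⟩ := mem_prod_add.mp hz
          by_cases hd1 : d.1 = R1.zero
          · have hd2 : d.2 = R2.zero := ((mem_prodS_iff d).mp hd).mp hd1
            have hz10 : z.1 = R1.zero := by
              have hz1' : z.1 ∈ R1.add (R1.mul a.1 d.1) (R1.mul b.1 d.1) := hz1
              rw [hd1, h1.mul_zero a.1 trivial, h1.mul_zero b.1 trivial] at hz1'
              exact (h1.zero_add z.1 trivial R1.zero trivial).mp hz1'
            have hz20 : z.2 = R2.zero := by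
              have hz2' : z.2 ∈ R2.add (R2.mul a.2 d.2) (R2.mul b.2 d.2) := hz2
              rw [hd2, h2.mul_zero a.2 trivial, h2.mul_zero b.2 trivial] at hz2'
              exact (h2.zero_add z.2 trivial R2.zero trivial).mp hz2'
            obtain ⟨x, hx⟩ := haddne a ha b hb
            refine ⟨x, hx, Prod.ext_iff.mpr ⟨?_, ?_⟩⟩
            · show R1.mul x.1 d.1 = z.1
              rw [hd1, h1.mul_zero x.1 trivial, hz10]
            · show R2.mul x.2 d.2 = z.2
              rw [hd2, h2.mul_zero x.2 trivial, hz20]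
          · have hd2 : d.2 ≠ R2.zero := fun h => hd1 (((mem_prodS_iff d).mp hd).mpr h)
            have i1 : z.1 ∈ (fun x => R1.mul x d.1) '' (R1.add a.1 b.1) := by
              rw [h1.distrib_eq a.1 trivial b.1 trivial d.1 trivial]
              exact hz1
            have i2 : z.2 ∈ (fun x => R2.mul x d.2) '' (R2.add a.2 b.2) := by
              rw [h2.distrib_eq a.2 trivial b.2 trivial d.2 trivial]
              exact hz2
            obtain ⟨x1, hx1, hx1e⟩ := i1
            obtain ⟨x2, hx2, hx2e⟩ := i2
            have e1 : x1 = R1.zero ↔ z.1 = R1.zero := by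
              rw [← hx1e]
              simp only [hf_mul_eq_zero h1]
              exact ⟨fun h => Or.inl h, fun h => h.resolve_right hd1⟩
            have e2 : x2 = R2.zero ↔ z.2 = R2.zero := by
              rw [← hx2e]
              simp only [hf_mul_eq_zero h2]
              exact ⟨fun h => Or.inl h, fun h => h.resolve_right hd2⟩
            refine ⟨(x1, x2), mem_prod_add.mpr ⟨⟨hx1, hx2⟩, ?_⟩,
              Prod.ext_iff.mpr ⟨hx1e, hx2e⟩⟩
            rw [mem_prodS_iff]
            exact e1.trans (((mem_prodS_iff z).mp hzS).trans e2.symm) }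
  have hhyp : (prodData R1 R2).IsHyperbolicOn (prodS R1 R2) := by
    show (prodData R1 R2).add _ _ = prodS R1 R2
    ext e
    rw [mem_prod_add]
    have m1 : e.1 ∈ R1.add R1.one (R1.neg R1.one) := by
      have e1 : R1.add R1.one (R1.neg R1.one) = Set.univ := h1b
      rw [e1]; trivial
    have m2 : e.2 ∈ R2.add R2.one (R2.neg R2.one) := by
      have e2 : R2.add R2.one (R2.neg R2.one) = Set.univ := h2b
      rw [e2]; trivial
    exact ⟨fun h => h.2, fun h => ⟨⟨m1, m2⟩, h⟩⟩
  refine ⟨hhf, hhyp, ?_, ?_, ?_⟩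
  · exact
    { maps_to := fun _ _ => trivial
      map_zero := rfl
      map_one := rfl
      map_neg := fun _ _ => rfl
      map_mul := fun _ _ _ _ => rfl
      map_add := fun a _ b _ c _ hc => (mem_prod_add.mp hc).1.1 }
  · exact
    { maps_to := fun _ _ => trivial
      map_zero := rfl
      map_one := rfl
      map_neg := fun _ _ => rfl
      map_mul := fun _ _ _ _ => rfl
      map_add := fun a _ b _ c _ hc => (mem_prod_add.mp hc).1.2 }
  · intro γ F hF hFb p1 p2 hp1 hp2
    have qS : ∀ x, (p1 x, p2 x) ∈ prodS R1 R2 := by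
      intro x
      rw [mem_prodS_iff]
      by_cases hx : x = F.zero
      · subst hx
        exact iff_of_true hp1.map_zero hp2.map_zero
      · exact iff_of_false
          (hf_morph_ne_zero hF h1.toIsMultiringOn h1.one_ne_zero hp1 hx)
          (hf_morph_ne_zero hF h2.toIsMultiringOn h2.one_ne_zero hp2 hx)
    refine ⟨fun x => (p1 x, p2 x), ⟨?_, fun x => ⟨rfl, rfl⟩⟩, ?_⟩
    · exact
      { maps_to := fun a _ => qS a
        map_zero := Prod.ext_iff.mpr ⟨hp1.map_zero, hp2.map_zero⟩
        map_one := Prod.ext_iff.mpr ⟨hp1.map_one, hp2.map_one⟩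
        map_neg := fun a _ => Prod.ext_iff.mpr
          ⟨hp1.map_neg a trivial, hp2.map_neg a trivial⟩
        map_mul := fun a _ b _ => Prod.ext_iff.mpr
          ⟨hp1.map_mul a trivial b trivial, hp2.map_mul a trivial b trivial⟩
        map_add := fun a _ b _ c _ hc => mem_prod_add.mpr
          ⟨⟨hp1.map_add a trivial b trivial c trivial hc,
            hp2.map_add a trivial b trivial c trivial hc⟩, qS c⟩ }
    · rintro q' ⟨-, hq⟩
      funext x
      exact Prod.ext_iff.mpr ⟨(hq x).1, (hq x).2⟩

end IgrPaper
end

section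
/- The trivial graded ring functor $\mathbb{T}: \mathrm{Ring}_2 \to \mathrm{Igr}$ (sending an $\mathbb{F}_2$-algebra $A$ to the inductive graded ring with level 0 equal to $\mathbb{F}_2$ and all levels $n \geq 1$ equal to $A$ with identity transition maps) is full and faithful, and the functor $\mathbb{A}: \mathrm{Igr} \to \mathrm{Ring}_2$, $\mathbb{A}(R) = \varinjlim_{n} R_n$, is left adjoint to $\mathbb{T}$; moreover $\mathbb{A} \circ \mathbb{T}$ is naturally isomorphic to the identity functor on $\mathrm{Ring}_2$. -/
namespace IgrPaper

/-- Data of an inductive graded ring: a family of carriers, additions, pointed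
elements `⊤ₙ` and zero, and graded multiplications. -/
structure IgrData : Type 1 where
  C : ℕ → Type
  add : ∀ {n}, C n → C n → C n
  zero : ∀ n, C n
  top : ∀ n, C n
  mul : ∀ {n m}, C n → C m → C (n + m)

namespace IgrData

/-- The transition map `hₙ = ⊤₁ *₁ₙ (-) : Rₙ → Rₙ₊₁`. -/
def h (R : IgrData) {n : ℕ} (x : R.C n) : R.C (n + 1) :=
  cast (congrArg R.C (Nat.add_comm 1 n)) (R.mul (R.top 1) x)

/-- The axioms of an inductive graded ring. -/
structure IsIgr (R : IgrData) : Prop where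
  add_assoc : ∀ {n} (x y z : R.C n), R.add (R.add x y) z = R.add x (R.add y z)
  add_comm : ∀ {n} (x y : R.C n), R.add x y = R.add y x
  add_zero : ∀ {n} (x : R.C n), R.add x (R.zero n) = x
  add_self : ∀ {n} (x : R.C n), R.add x x = R.zero n
  zero_ne_top : R.zero 0 ≠ R.top 0
  level0 : ∀ x : R.C 0, x = R.zero 0 ∨ x = R.top 0
  mul_add : ∀ {n m} (x : R.C n) (y z : R.C m),
    R.mul x (R.add y z) = R.add (R.mul x y) (R.mul x z)
  add_mul : ∀ {n m} (x y : R.C n) (z : R.C m),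
    R.mul (R.add x y) z = R.add (R.mul x z) (R.mul y z)
  mul_assoc : ∀ {n m p} (x : R.C n) (y : R.C m) (z : R.C p),
    HEq (R.mul (R.mul x y) z) (R.mul x (R.mul y z))
  mul_comm : ∀ {n m} (x : R.C n) (y : R.C m), HEq (R.mul x y) (R.mul y x)
  mul_top0 : ∀ {n} (x : R.C n), R.mul x (R.top 0) = x
  top_mul_top : ∀ n m, R.mul (R.top n) (R.top m) = R.top (n + m)
  h_top : ∀ n, R.h (R.top n) = R.top (n + 1)
  h_compat : ∀ {n m} (x : R.C n) (y : R.C m),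
    HEq (R.mul (R.h x) (R.h y)) (R.h (R.h (R.mul x y)))

/-- Morphism of inductive graded rings: a levelwise family of pointed group
homomorphisms whose direct sum is a unital ring homomorphism. -/
structure IsIgrHom (R S : IgrData) (f : ∀ n, R.C n → S.C n) : Prop where
  map_add : ∀ (n : ℕ) (x y : R.C n), f n (R.add x y) = S.add (f n x) (f n y)
  map_zero : ∀ n, f n (R.zero n) = S.zero n
  map_top : ∀ n, f n (R.top n) = S.top n
  map_mul : ∀ (n m : ℕ) (x : R.C n) (y : R.C m),
    f (n + m) (R.mul x y) = S.mul (f n x) (f m y)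

/-- Iterated transition map `Rₙ → Rₙ₊ₖ`. -/
def hIter (R : IgrData) : ∀ (k : ℕ) {n : ℕ}, R.C n → R.C (n + k)
  | 0, _, x => x
  | k+1, _, x => R.h (R.hIter k x)

/-- Pure products of `n` elements of level 1. -/
inductive Pure1 (R : IgrData) : ∀ n, R.C n → Prop
  | base (a : R.C 1) : Pure1 R 1 a
  | step {n : ℕ} (x : R.C n) (a : R.C 1) : Pure1 R n x → Pure1 R (n + 1) (R.mul x a)

/-- Elements additively generated by pure products of level-1 elements. -/
inductive Gen1 (R : IgrData) : ∀ n, R.C n → Prop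
  | pure {n : ℕ} (x : R.C n) : Pure1 R n x → Gen1 R n x
  | zero (n : ℕ) : Gen1 R n (R.zero n)
  | add {n : ℕ} (x y : R.C n) : Gen1 R n x → Gen1 R n y → Gen1 R n (R.add x y)

/-- `R` is generated at level 1 (the condition defining `Igr₁`). -/
def GeneratedAt1 (R : IgrData) : Prop := ∀ n, 1 ≤ n → ∀ x : R.C n, Gen1 R n x

/-- The "hyperbolic" condition defining `Igr_h`: `a *₁₁ a = ⊤₁ *₁₁ a`. -/
def HCond (R : IgrData) : Prop := ∀ a : R.C 1, R.mul a a = R.mul (R.top 1) a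

/-- Membership in `Igr₊ = Igr₁ ∩ Igr_h`. -/
def IgrPlus (R : IgrData) : Prop := GeneratedAt1 R ∧ HCond R

/-- Marshall-type condition: all transition maps are injective. -/
def MC (R : IgrData) : Prop := ∀ n, Function.Injective fun x : R.C n => R.h x

end IgrData
end IgrPaper
namespace IgrPaper
namespace IgrData

/-- One-step relation generating the colimit of the system `(Rₙ, hₙ)`. -/
def colimRel (R : IgrData) : (Σ n, R.C n) → (Σ n, R.C n) → Prop :=
  fun p q => q = ⟨p.1 + 1, R.h p.2⟩

/-- The colimit `𝔸(R) = colimₙ Rₙ`. -/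
def Colim (R : IgrData) : Type := Quot (colimRel R)

/-- The canonical cocone map `Rₙ → 𝔸(R)`. -/
def cmk (R : IgrData) {n : ℕ} (x : R.C n) : Colim R := Quot.mk _ ⟨n, x⟩

/-- Multiplication on the colimit ring `𝔸(R)`. -/
noncomputable def cmul (R : IgrData) (a b : Colim R) : Colim R :=
  Quot.mk _ ⟨a.out.1 + b.out.1, R.mul a.out.2 b.out.2⟩

/-- Addition on the colimit ring `𝔸(R)`. -/
noncomputable def cadd (R : IgrData) (a b : Colim R) : Colim R :=
  Quot.mk _ ⟨a.out.1 + b.out.1,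
    R.add (R.hIter b.out.1 a.out.2)
      (cast (congrArg R.C (Nat.add_comm b.out.1 a.out.1)) (R.hIter a.out.1 b.out.2))⟩

/-- The levels of the trivial inductive graded ring `𝕋(B)`. -/
abbrev TC (B : Type) : ℕ → Type
  | 0 => ZMod 2
  | _+1 => B

/-- The trivial inductive graded ring `𝕋(B)` on a commutative ring `B`:
`𝔽₂` at level 0 and `B` at all higher levels, with identity transitions. -/
def TData (B : Type) [CommRing B] : IgrData where
  C := TC B
  add := fun {n} => match n with
    | 0 => fun x y => ((x : ZMod 2) + (y : ZMod 2) : ZMod 2)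
    | _+1 => fun x y => ((x : B) + (y : B) : B)
  zero := fun n => match n with
    | 0 => ((0 : ZMod 2) : TC B 0)
    | k+1 => ((0 : B) : TC B (k+1))
  top := fun n => match n with
    | 0 => ((1 : ZMod 2) : TC B 0)
    | k+1 => ((1 : B) : TC B (k+1))
  mul := fun {n m} => match n, m with
    | 0, 0 => fun x y => ((x : ZMod 2) * (y : ZMod 2) : ZMod 2)
    | 0, _+1 => fun x b => (if (x : ZMod 2) = 1 then (b : B) else (0 : B) : B)
    | _+1, 0 => fun b x => (if (x : ZMod 2) = 1 then (b : B) else (0 : B) : B)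
    | _+1, _+1 => fun a b => ((a : B) * (b : B) : B)

/-- The levels of `𝕋(𝔸(R))`. -/
abbrev TCc (R : IgrData) : ℕ → Type
  | 0 => ZMod 2
  | _+1 => Colim R

/-- The inductive graded ring `𝕋(𝔸(R))`. -/
noncomputable def TColim (R : IgrData) : IgrData where
  C := TCc R
  add := fun {n} => match n with
    | 0 => fun x y => ((x : ZMod 2) + (y : ZMod 2) : ZMod 2)
    | _+1 => fun x y => (R.cadd x y : Colim R)
  zero := fun n => match n with
    | 0 => ((0 : ZMod 2) : TCc R 0)
    | k+1 => (R.cmk (R.zero 0) : TCc R (k+1))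
  top := fun n => match n with
    | 0 => ((1 : ZMod 2) : TCc R 0)
    | k+1 => (R.cmk (R.top 0) : TCc R (k+1))
  mul := fun {n m} => match n, m with
    | 0, 0 => fun x y => ((x : ZMod 2) * (y : ZMod 2) : ZMod 2)
    | 0, _+1 => fun x q => (if (x : ZMod 2) = 1 then (q : Colim R) else R.cmk (R.zero 0) : Colim R)
    | _+1, 0 => fun q x => (if (x : ZMod 2) = 1 then (q : Colim R) else R.cmk (R.zero 0) : Colim R)
    | _+1, _+1 => fun p q => (R.cmul p q : Colim R)

open Classical in
/-- The canonical (unit) morphism `η_R : R → 𝕋(𝔸(R))`. -/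
noncomputable def eta (R : IgrData) : ∀ n, R.C n → (TColim R).C n
  | 0 => fun x => (if x = R.top 0 then (1 : ZMod 2) else (0 : ZMod 2) : ZMod 2)
  | _+1 => fun x => (R.cmk x : Colim R)

/-- The functor `𝕋` on morphisms. -/
def Tmap {A B : Type} [CommRing A] [CommRing B] (g : A →+* B) :
    ∀ n, (TData A).C n → (TData B).C n
  | 0 => fun x => (x : ZMod 2)
  | _+1 => fun a => (g (a : A) : B)

/-- `𝕋` applied to a plain function `𝔸(R) → A`. -/
def TmapF {A : Type} [CommRing A] (R : IgrData) (g : Colim R → A) :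
    ∀ n, (TColim R).C n → (TData A).C n
  | 0 => fun x => (x : ZMod 2)
  | _+1 => fun q => (g (q : Colim R) : A)

/-- The induced map on colimits `𝔸(f) : 𝔸(R) → 𝔸(S)`. -/
noncomputable def cmap {R S : IgrData} (f : ∀ n, R.C n → S.C n) (q : Colim R) : Colim S :=
  Quot.mk _ ⟨q.out.1, f q.out.1 q.out.2⟩

end IgrData
end IgrPaper

/-
From level 1 on, every transition map of `𝕋(A)` is the identity of `A`, and level 0
is `𝔽₂`, which maps to `A` through `0 ↦ 0, 1 ↦ 1`; this evaluation is compatible with the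
transitions and with the graded operations, so it identifies `𝔸(𝕋(A))` with `A`, naturally in
`A`. A morphism `𝕋(A) → 𝕋(B)` commutes with these identity transitions, hence is one and the same
map `A → B` on all positive levels; it is multiplicative because `*₁₁` lands in level `2`. For the
adjunction, a morphism `f : R → 𝕋(A)` followed by evaluation is compatible with the transitions of
`R`, so it factors uniquely through the colimit. The operations of `𝔸(R)` are computed on
representatives pushed to a common level; that this is well defined comes from the fact that two
representatives of the same class become equal after enough transitions.
-/

namespace IgrPaper
namespace IgrData

section Transport
variable {R : IgrData}

lemma h_heq {n n' : ℕ} {x : R.C n} {x' : R.C n'} (hn : n = n') (hx : x ≍ x') :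
    R.h x ≍ R.h x' := by
  subst hn; rw [eq_of_heq hx]

lemma hIter_heq {k k' n n' : ℕ} {x : R.C n} {x' : R.C n'} (hk : k = k') (hn : n = n')
    (hx : x ≍ x') : R.hIter k x ≍ R.hIter k' x' := by
  subst hk hn; rw [eq_of_heq hx]

lemma mul_heq {n n' m m' : ℕ} {x : R.C n} {x' : R.C n'} {y : R.C m} {y' : R.C m'}
    (hn : n = n') (hm : m = m') (hx : x ≍ x') (hy : y ≍ y') : R.mul x y ≍ R.mul x' y' := by
  subst hn hm; rw [eq_of_heq hx, eq_of_heq hy]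

lemma add_heq {n n' : ℕ} {x y : R.C n} {x' y' : R.C n'} (hn : n = n') (hx : x ≍ x')
    (hy : y ≍ y') : R.add x y ≍ R.add x' y' := by
  subst hn; rw [eq_of_heq hx, eq_of_heq hy]

lemma cmk_heq {n m : ℕ} {x : R.C n} {y : R.C m} (hnm : n = m) (hxy : x ≍ y) :
    R.cmk x = R.cmk y := by
  subst hnm; rw [eq_of_heq hxy]

lemma cast_zero {a b : ℕ} (e : a = b) : cast (congrArg R.C e) (R.zero a) = R.zero b := by
  subst e; rfl

lemma cast_add {a b : ℕ} (e : a = b) (x y : R.C a) :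
    cast (congrArg R.C e) (R.add x y)
      = R.add (cast (congrArg R.C e) x) (cast (congrArg R.C e) y) := by
  subst e; rfl

lemma apply_cast {S : IgrData} (f : ∀ n, R.C n → S.C n) {a b : ℕ} (e : a = b) (x : R.C a) :
    f b (cast (congrArg R.C e) x) = cast (congrArg S.C e) (f a x) := by
  subst e; rfl

lemma hIter_hIter_heq (a b : ℕ) {n : ℕ} (x : R.C n) :
    R.hIter b (R.hIter a x) ≍ R.hIter (a + b) x := by
  induction b with
  | zero => rfl
  | succ b ih => exact h_heq (Nat.add_assoc n a b) ih

lemma hIter_comm_heq (a b : ℕ) {n : ℕ} (x : R.C n) :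
    R.hIter a (R.hIter b x) ≍ R.hIter b (R.hIter a x) :=
  (hIter_hIter_heq b a x).trans
    ((hIter_heq (Nat.add_comm b a) rfl HEq.rfl).trans (hIter_hIter_heq a b x).symm)

end Transport

namespace IsIgr
variable {R : IgrData} (hR : R.IsIgr)
include hR

lemma mul_zero {n m : ℕ} (x : R.C n) : R.mul x (R.zero m) = R.zero (n + m) := by
  have h := congrArg (R.mul x) (hR.add_zero (R.zero m))
  rw [hR.mul_add] at h
  rw [← h, hR.add_self]

lemma zero_mul {n m : ℕ} (x : R.C m) : R.mul (R.zero n) x = R.zero (n + m) := by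
  have h := congrArg (R.mul · x) (hR.add_zero (R.zero n))
  simp only [hR.add_mul] at h
  rw [← h, hR.add_self]

lemma h_zero (n : ℕ) : R.h (R.zero n) = R.zero (n + 1) := by
  rw [h, hR.mul_zero, cast_zero (Nat.add_comm 1 n)]

lemma h_add {n : ℕ} (x y : R.C n) : R.h (R.add x y) = R.add (R.h x) (R.h y) := by
  rw [h, hR.mul_add, cast_add (Nat.add_comm 1 n)]; rfl

lemma hIter_add (k : ℕ) {n : ℕ} (x y : R.C n) :
    R.hIter k (R.add x y) = R.add (R.hIter k x) (R.hIter k y) := by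
  induction k with
  | zero => rfl
  | succ k ih => exact (congrArg R.h ih).trans (hR.h_add _ _)

lemma mul_h_left {n m : ℕ} (x : R.C n) (y : R.C m) : R.mul (R.h x) y ≍ R.h (R.mul x y) :=
  (mul_heq (Nat.add_comm n 1) rfl (cast_heq _ _) HEq.rfl).trans
    ((hR.mul_assoc (R.top 1) x y).trans (cast_heq _ _).symm)

lemma mul_h_right {n m : ℕ} (x : R.C n) (y : R.C m) : R.mul x (R.h y) ≍ R.h (R.mul x y) :=
  ((hR.mul_comm _ _).trans (hR.mul_h_left y x)).trans (h_heq (Nat.add_comm m n) (hR.mul_comm y x))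

lemma hIter_mul_left (k : ℕ) {n m : ℕ} (x : R.C n) (y : R.C m) :
    R.mul (R.hIter k x) y ≍ R.hIter k (R.mul x y) := by
  induction k with
  | zero => rfl
  | succ k ih => exact (hR.mul_h_left _ _).trans (h_heq (Nat.add_right_comm n k m) ih)

lemma hIter_mul_right (k : ℕ) {n m : ℕ} (x : R.C n) (y : R.C m) :
    R.mul x (R.hIter k y) ≍ R.hIter k (R.mul x y) := by
  induction k with
  | zero => rfl
  | succ k ih => exact (hR.mul_h_right _ _).trans (h_heq (Nat.add_assoc n m k).symm ih)

lemma hIter_mul_hIter (k l : ℕ) {n m : ℕ} (x : R.C n) (y : R.C m) :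
    R.mul (R.hIter k x) (R.hIter l y) ≍ R.hIter (k + l) (R.mul x y) :=
  (hR.hIter_mul_left k x _).trans <|
    (hIter_heq rfl (by omega) (hR.hIter_mul_right l x y)).trans <|
      (hIter_hIter_heq l k _).trans (hIter_heq (Nat.add_comm l k) rfl HEq.rfl)

end IsIgr

section Colim
variable {R : IgrData}

lemma cmk_h {n : ℕ} (x : R.C n) : R.cmk (R.h x) = R.cmk x :=
  (Quot.sound (show R.colimRel ⟨n, x⟩ ⟨n + 1, R.h x⟩ from rfl)).symm

lemma cmk_hIter (k : ℕ) {n : ℕ} (x : R.C n) : R.cmk (R.hIter k x) = R.cmk x := by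
  induction k with
  | zero => rfl
  | succ k ih => exact (cmk_h _).trans ih

variable (R) in
def CommonImage (p q : Σ n, R.C n) : Prop :=
  ∃ k l, p.1 + k = q.1 + l ∧ R.hIter k p.2 ≍ R.hIter l q.2

lemma commonImage_equivalence : Equivalence R.CommonImage where
  refl _ := ⟨0, 0, rfl, HEq.rfl⟩
  symm := fun ⟨k, l, e, hkl⟩ => ⟨l, k, e.symm, hkl.symm⟩
  trans := by
    rintro p q s ⟨k₁, l₁, e₁, h₁⟩ ⟨k₂, l₂, e₂, h₂⟩
    refine ⟨k₁ + k₂, l₂ + l₁, by omega, ?_⟩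
    exact (hIter_hIter_heq k₁ k₂ p.2).symm.trans <| (hIter_heq rfl e₁ h₁).trans <|
      (hIter_comm_heq k₂ l₁ q.2).trans <| (hIter_heq rfl e₂ h₂).trans (hIter_hIter_heq l₂ l₁ s.2)

lemma cmk_out (q : Colim R) : R.cmk q.out.2 = q :=
  Quot.out_eq q

lemma cmk_eq_cmk_of_hIter_heq {n m k l : ℕ} {x : R.C n} {y : R.C m} (e : n + k = m + l)
    (hkl : R.hIter k x ≍ R.hIter l y) : R.cmk x = R.cmk y :=
  (cmk_hIter k x).symm.trans <| (cmk_heq e hkl).trans (cmk_hIter l y)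

lemma exists_hIter_heq_of_cmk_eq {n m : ℕ} {x : R.C n} {y : R.C m} (hxy : R.cmk x = R.cmk y) :
    ∃ k l, n + k = m + l ∧ R.hIter k x ≍ R.hIter l y := by
  refine commonImage_equivalence.eqvGen_iff.mp
    (Relation.EqvGen.mono ?_ _ _ (Quot.eqvGen_exact hxy))
  rintro p _ rfl
  exact ⟨1, 0, rfl, HEq.rfl⟩

lemma hIter_heq_hIter_of_le {n m k l K L : ℕ} {x : R.C n} {y : R.C m}
    (hkl : R.hIter k x ≍ R.hIter l y) (e : n + k = m + l) (hK : k ≤ K) (eK : n + K = m + L) :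
    R.hIter K x ≍ R.hIter L y := by
  obtain ⟨d, rfl⟩ := Nat.exists_eq_add_of_le hK
  obtain rfl : L = l + d := by omega
  exact (hIter_hIter_heq k d x).symm.trans <|
    (hIter_heq rfl e hkl).trans (hIter_hIter_heq l d y)

lemma IsIgr.cadd_cmk (hR : R.IsIgr) {n : ℕ} (x y : R.C n) :
    R.cadd (R.cmk x) (R.cmk y) = R.cmk (R.add x y) := by
  obtain ⟨k, l, e, hkl⟩ := exists_hIter_heq_of_cmk_eq (cmk_out (R.cmk x))
  obtain ⟨k', l', e', hkl'⟩ := exists_hIter_heq_of_cmk_eq (cmk_out (R.cmk y))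
  refine cmk_eq_cmk_of_hIter_heq (k := k + k') (l := n + l + l') (by omega) ?_
  rw [hR.hIter_add, hR.hIter_add]
  refine add_heq (by omega) ?_ ?_
  · exact (hIter_hIter_heq _ _ _).trans (hIter_heq_hIter_of_le hkl e (by omega) (by omega))
  · exact (hIter_heq rfl (Nat.add_comm _ _) (cast_heq _ _)).trans <|
      (hIter_hIter_heq _ _ _).trans (hIter_heq_hIter_of_le hkl' e' (by omega) (by omega))

lemma IsIgr.cmul_cmk (hR : R.IsIgr) {n m : ℕ} (x : R.C n) (y : R.C m) :
    R.cmul (R.cmk x) (R.cmk y) = R.cmk (R.mul x y) := by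
  obtain ⟨k, l, e, hkl⟩ := exists_hIter_heq_of_cmk_eq (cmk_out (R.cmk x))
  obtain ⟨k', l', e', hkl'⟩ := exists_hIter_heq_of_cmk_eq (cmk_out (R.cmk y))
  refine cmk_eq_cmk_of_hIter_heq (k := k + k') (l := l + l') (by omega) ?_
  exact (hR.hIter_mul_hIter k k' _ _).symm.trans <|
    (mul_heq e e' hkl hkl').trans (hR.hIter_mul_hIter l l' x y)

lemma IsIgr.cmk_zero (hR : R.IsIgr) (n : ℕ) : R.cmk (R.zero n) = R.cmk (R.zero 0) := by
  induction n with
  | zero => rfl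
  | succ n ih => rw [← hR.h_zero, cmk_h, ih]

lemma IsIgr.cmk_top (hR : R.IsIgr) (n : ℕ) : R.cmk (R.top n) = R.cmk (R.top 0) := by
  induction n with
  | zero => rfl
  | succ n ih => rw [← hR.h_top, cmk_h, ih]

end Colim

section Hom
variable {R S : IgrData} {f : ∀ n, R.C n → S.C n}

lemma isIgrHom_id (R : IgrData) : IsIgrHom R R fun _ x => x :=
  ⟨fun _ _ _ => rfl, fun _ => rfl, fun _ => rfl, fun _ _ _ _ => rfl⟩

lemma IsIgrHom.map_h (hf : IsIgrHom R S f) {n : ℕ} (x : R.C n) :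
    f (n + 1) (R.h x) = S.h (f n x) := by
  rw [h, apply_cast f (Nat.add_comm 1 n), hf.map_mul, hf.map_top]; rfl

lemma IsIgrHom.map_hIter (hf : IsIgrHom R S f) (k : ℕ) {n : ℕ} (x : R.C n) :
    f (n + k) (R.hIter k x) = S.hIter k (f n x) := by
  induction k with
  | zero => rfl
  | succ k ih => exact (hf.map_h _).trans (congrArg S.h ih)

end Hom

section Trivial
variable {A B : Type} [CommRing A] [CommRing B]

lemma zmod_two_cases (x : ZMod 2) : x = 0 ∨ x = 1 := by
  revert x; decide

lemma TData_h_zero (x : TC A 0) :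
    (TData A).h (n := 0) x = (if x = 1 then (1 : A) else 0 : TC A 1) := by
  show cast _ _ = _
  rw [cast_eq]; rfl

lemma TData_h_succ {n : ℕ} (a : TC A (n + 1)) :
    (TData A).h (n := n + 1) a = (a : TC A (n + 2)) := by
  show cast _ _ = _
  erw [cast_eq]
  exact one_mul a

lemma TData_cmk_succ (n : ℕ) (a : A) :
    (TData A).cmk (n := n + 1) a = (TData A).cmk (n := 1) a := by
  induction n with
  | zero => rfl
  | succ n ih =>
      rw [← ih, ← cmk_h (R := TData A) (n := n + 1) a, TData_h_succ]

variable (A) in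
def evalTC : ∀ n, TC A n → A
  | 0 => fun x => if x = 1 then 1 else 0
  | _+1 => fun a => a

lemma evalTC_h {n : ℕ} (x : TC A n) : evalTC A (n + 1) ((TData A).h x) = evalTC A n x := by
  cases n with
  | zero => rw [TData_h_zero]; rfl
  | succ n => rw [TData_h_succ]; rfl

lemma evalTC_hIter (k : ℕ) {n : ℕ} (x : TC A n) :
    evalTC A (n + k) ((TData A).hIter k x) = evalTC A n x := by
  induction k with
  | zero => rfl
  | succ k ih => exact (evalTC_h _).trans ih

lemma evalTC_cast {a b : ℕ} (e : a = b) (x : TC A a) :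
    evalTC A b (cast (congrArg (TData A).C e) x) = evalTC A a x := by
  subst e; rfl

lemma evalTC_add (h2 : ∀ x : A, x + x = 0) {n : ℕ} (x y : TC A n) :
    evalTC A n ((TData A).add x y) = evalTC A n x + evalTC A n y := by
  cases n with
  | zero =>
      rcases zmod_two_cases x with rfl | rfl <;> rcases zmod_two_cases y with rfl | rfl <;>
        simp [evalTC, TData]
      exact (h2 1).symm
  | succ n => rfl

lemma evalTC_mul {n m : ℕ} (x : TC A n) (y : TC A m) :
    evalTC A (n + m) ((TData A).mul x y) = evalTC A n x * evalTC A m y := by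
  cases n <;> cases m
  · rcases zmod_two_cases x with rfl | rfl <;> rcases zmod_two_cases y with rfl | rfl <;>
      simp [evalTC, TData]
  · rcases zmod_two_cases x with rfl | rfl <;> simp [evalTC, TData]
  · rcases zmod_two_cases y with rfl | rfl <;> simp [evalTC, TData]
  · rfl

lemma evalTC_Tmap (g : A →+* B) {n : ℕ} (x : TC A n) :
    evalTC B n (Tmap g n x) = g (evalTC A n x) := by
  cases n with
  | zero => rcases zmod_two_cases x with rfl | rfl <;> simp [evalTC, Tmap]
  | succ n => rfl

lemma Tmap_injective :
    Function.Injective (Tmap : (A →+* B) → ∀ n, (TData A).C n → (TData B).C n) :=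
  fun _ _ hgg' => RingHom.ext fun a => congrFun (congrFun hgg' 1) a

namespace IsIgrHom
variable {f : ∀ n, (TData A).C n → (TData B).C n} (hf : IsIgrHom (TData A) (TData B) f)
include hf

lemma TData_map_succ (n : ℕ) (a : A) : f (n + 1) a = f 1 a := by
  induction n with
  | zero => rfl
  | succ n ih =>
      have hn := hf.map_h (n := n + 1) a
      rw [TData_h_succ] at hn
      exact (hn.trans (TData_h_succ _)).trans ih

def toRingHom : A →+* B :=
  RingHom.mk' ⟨⟨fun a => f 1 a, hf.map_top 1⟩,
    fun a b => (hf.TData_map_succ 1 (a * b)).symm.trans (hf.map_mul 1 1 a b)⟩ (hf.map_add 1)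

lemma eq_Tmap_toRingHom (n : ℕ) (x : (TData A).C n) : f n x = Tmap hf.toRingHom n x := by
  cases n with
  | zero =>
      rcases zmod_two_cases x with rfl | rfl
      · exact hf.map_zero 0
      · exact hf.map_top 0
  | succ n => exact hf.TData_map_succ n x

end IsIgrHom
end Trivial

section Lift
variable {R : IgrData} {A : Type} [CommRing A] {f : ∀ n, R.C n → (TData A).C n}

def colimLift (hf : IsIgrHom R (TData A) f) : Colim R → A :=
  Quot.lift (fun p => evalTC A p.1 (f p.1 p.2)) <| by
    rintro ⟨n, x⟩ _ rfl
    exact ((congrArg (evalTC A (n + 1)) (hf.map_h x)).trans (evalTC_h _)).symm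

variable (hf : IsIgrHom R (TData A) f)

lemma colimLift_out (q : Colim R) : evalTC A q.out.1 (f q.out.1 q.out.2) = colimLift hf q := by
  conv_rhs => rw [← cmk_out q]
  rfl

lemma colimLift_cadd (h2 : ∀ x : A, x + x = 0) (a b : Colim R) :
    colimLift hf (R.cadd a b) = colimLift hf a + colimLift hf b := by
  show evalTC A _ (f _ (R.add _ _)) = _
  dsimp only
  erw [hf.map_add, evalTC_add h2, hf.map_hIter, evalTC_hIter, apply_cast f (Nat.add_comm _ _),
    evalTC_cast (Nat.add_comm _ _), hf.map_hIter, evalTC_hIter, colimLift_out, colimLift_out]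

lemma colimLift_cmul (a b : Colim R) :
    colimLift hf (R.cmul a b) = colimLift hf a * colimLift hf b := by
  show evalTC A _ (f _ (R.mul _ _)) = _
  erw [hf.map_mul, evalTC_mul, colimLift_out, colimLift_out]

lemma colimLift_cmk_top : colimLift hf (R.cmk (R.top 0)) = 1 := by
  show evalTC A 0 (f 0 (R.top 0)) = 1
  rw [hf.map_top]
  simp [evalTC, TData]

lemma eq_colimLift {g : Colim R → A} (hg : ∀ n x, TmapF R g n (eta R n x) = f n x) :
    g = colimLift hf := by
  funext q
  induction q using Quot.ind with
  | _ p =>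
    obtain ⟨n, x⟩ := p
    calc g (R.cmk x) = g (R.cmk (R.h x)) := by rw [cmk_h]
      _ = colimLift hf (R.cmk (R.h x)) := hg (n + 1) (R.h x)
      _ = colimLift hf (R.cmk x) := by rw [cmk_h]

end Lift

lemma eta_top {R : IgrData} : eta R 0 (R.top 0) = (1 : ZMod 2) :=
  if_pos rfl

namespace IsIgr
variable {R : IgrData} (hR : R.IsIgr)
include hR

lemma eta_zero : eta R 0 (R.zero 0) = (0 : ZMod 2) :=
  if_neg hR.zero_ne_top

lemma eta_add (n : ℕ) (x y : R.C n) :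
    eta R n (R.add x y) = (TColim R).add (eta R n x) (eta R n y) := by
  cases n with
  | zero =>
      rcases hR.level0 x with rfl | rfl <;> rcases hR.level0 y with rfl | rfl
      · rw [hR.add_zero, hR.eta_zero]; rfl
      · rw [hR.add_comm, hR.add_zero, hR.eta_zero, eta_top]; rfl
      · rw [hR.add_zero, hR.eta_zero, eta_top]; rfl
      · rw [hR.add_self, hR.eta_zero, eta_top]; rfl
  | succ n => exact (hR.cadd_cmk x y).symm

lemma eta_mul (n m : ℕ) (x : R.C n) (y : R.C m) :
    eta R (n + m) (R.mul x y) = (TColim R).mul (eta R n x) (eta R m y) := by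
  cases n <;> cases m
  · rcases hR.level0 x with rfl | rfl <;> rcases hR.level0 y with rfl | rfl
    · rw [hR.zero_mul, hR.eta_zero]; rfl
    · rw [hR.zero_mul, hR.eta_zero, eta_top]; rfl
    · rw [hR.mul_zero, hR.eta_zero, eta_top]; rfl
    · rw [hR.top_mul_top, eta_top]; rfl
  · rcases hR.level0 x with rfl | rfl
    · show R.cmk (R.mul (R.zero 0) y) = _
      rw [hR.zero_mul, hR.cmk_zero, hR.eta_zero]; rfl
    · show R.cmk (R.mul (R.top 0) y) = _
      rw [eta_top]
      exact cmk_heq (Nat.zero_add _) ((hR.mul_comm _ y).trans (heq_of_eq (hR.mul_top0 y)))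
  · rcases hR.level0 y with rfl | rfl
    · show R.cmk (R.mul x (R.zero 0)) = _
      rw [hR.mul_zero, hR.cmk_zero, hR.eta_zero]; rfl
    · show R.cmk (R.mul x (R.top 0)) = _
      rw [eta_top, hR.mul_top0]; rfl
  · exact (hR.cmul_cmk x y).symm

lemma isIgrHom_eta : IsIgrHom R (TColim R) (eta R) where
  map_add := hR.eta_add
  map_zero
    | 0 => hR.eta_zero
    | n + 1 => hR.cmk_zero (n + 1)
  map_top
    | 0 => eta_top
    | n + 1 => hR.cmk_top (n + 1)
  map_mul := hR.eta_mul

lemma TmapF_colimLift_eta {A : Type} [CommRing A] {f : ∀ n, R.C n → (TData A).C n}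
    (hf : IsIgrHom R (TData A) f) (n : ℕ) (x : R.C n) :
    TmapF R (colimLift hf) n (eta R n x) = f n x := by
  cases n with
  | zero =>
      rcases hR.level0 x with rfl | rfl
      · rw [hf.map_zero 0]; exact hR.eta_zero
      · rw [hf.map_top 0]; exact eta_top
  | succ n => rfl

end IsIgr

section Counit
variable {A B : Type} [CommRing A] [CommRing B]

variable (A) in
def evalColim : Colim (TData A) → A :=
  colimLift (isIgrHom_id (TData A))

variable (A) in
def colimTDataEquiv : Colim (TData A) ≃ A where
  toFun := evalColim A
  invFun a := (TData A).cmk (n := 1) a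
  right_inv _ := rfl
  left_inv q := by
    induction q using Quot.ind with
    | _ p =>
      obtain ⟨n, x⟩ := p
      cases n with
      | zero => exact (congrArg (TData A).cmk (TData_h_zero (A := A) x).symm).trans (cmk_h x)
      | succ n => exact (TData_cmk_succ (A := A) n x).symm

lemma evalColim_cmap (g : A →+* B) (q : Colim (TData A)) :
    evalColim B (cmap (Tmap g) q) = g (evalColim A q) := by
  exact (evalTC_Tmap g _).trans (congrArg g (colimLift_out (isIgrHom_id (TData A)) q))

end Counit
end IgrData

open IgrData

/-- The trivial graded ring functor `𝕋 : Ring₂ → Igr` is full and faithful, the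
colimit functor `𝔸 : Igr → Ring₂`, `𝔸(R) = colimₙ Rₙ`, is left adjoint to `𝕋`
(the unit `η_R : R → 𝕋(𝔸(R))` is a reflection), and `𝔸 ∘ 𝕋` is naturally
isomorphic to the identity functor on `Ring₂`. -/
theorem stmt10 :
    -- 𝕋 is faithful
    (∀ (A B : Type) [CommRing A] [CommRing B],
      (∀ x : A, x + x = 0) → (∀ x : B, x + x = 0) →
      ∀ g g' : A →+* B, (∀ n x, Tmap g n x = Tmap g' n x) → g = g') ∧
    -- 𝕋 is full
    (∀ (A B : Type) [CommRing A] [CommRing B],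
      (∀ x : A, x + x = 0) → (∀ x : B, x + x = 0) →
      ∀ f : ∀ n, (TData A).C n → (TData B).C n,
        IsIgrHom (TData A) (TData B) f → ∃ g : A →+* B, ∀ n x, f n x = Tmap g n x) ∧
    -- 𝔸 is left adjoint to 𝕋: the unit `η` is a reflection of `R` along `𝕋`
    (∀ R : IgrData, R.IsIgr →
      IsIgrHom R (TColim R) (eta R) ∧
      ∀ (A : Type) [CommRing A], (∀ x : A, x + x = 0) →
        ∀ f : ∀ n, R.C n → (TData A).C n, IsIgrHom R (TData A) f →
          ∃! g : Colim R → A,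
            (∀ x y, g (R.cadd x y) = g x + g y) ∧
            (∀ x y, g (R.cmul x y) = g x * g y) ∧
            g (R.cmk (R.top 0)) = 1 ∧
            ∀ n x, TmapF R g n (eta R n x) = f n x) ∧
    -- 𝔸 ∘ 𝕋 is naturally isomorphic to the identity
    (∃ E : ∀ (A : Type) (iA : CommRing A), (∀ x : A, x + x = 0) →
        (Colim (@TData A iA) ≃ A),
      (∀ (A : Type) (iA : CommRing A) (h2 : ∀ x : A, x + x = 0),
        (∀ x y, E A iA h2 (cadd (@TData A iA) x y) =
          @HAdd.hAdd A A A _ (E A iA h2 x) (E A iA h2 y)) ∧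
        (∀ x y, E A iA h2 (cmul (@TData A iA) x y) =
          @HMul.hMul A A A _ (E A iA h2 x) (E A iA h2 y)) ∧
        E A iA h2 (cmk (@TData A iA) ((@TData A iA).top 0)) = @OfNat.ofNat A 1 _) ∧
      (∀ (A B : Type) (iA : CommRing A) (iB : CommRing B)
        (h2A : ∀ x : A, x + x = 0) (h2B : ∀ x : B, x + x = 0)
        (g : @RingHom A B _ _) (q : Colim (@TData A iA)),
          E B iB h2B (cmap (@Tmap A B iA iB g) q) = g (E A iA h2A q))) := by
  refine ⟨fun A B _ _ _ _ g g' hgg' => Tmap_injective (funext fun n => funext (hgg' n)),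
    fun A B _ _ _ _ f hf => ⟨hf.toRingHom, hf.eq_Tmap_toRingHom⟩,
    fun R hR => ⟨hR.isIgrHom_eta, fun A _ h2 f hf => ?_⟩,
    fun A _ _ => colimTDataEquiv A,
    fun A _ h2 => ⟨colimLift_cadd (isIgrHom_id _) h2, colimLift_cmul (isIgrHom_id _),
      colimLift_cmk_top (isIgrHom_id _)⟩,
    fun A B _ _ _ _ g q => evalColim_cmap g q⟩
  exact ⟨colimLift hf, ⟨colimLift_cadd hf h2, colimLift_cmul hf, colimLift_cmk_top hf,
    hR.TmapF_colimLift_eta hf⟩, fun g hg => eq_colimLift hf hg.2.2.2⟩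

end IgrPaper
end

section
/- Let $R$ be an inductive graded ring in $\mathrm{Igr}_+$ (i.e., $R$ is generated at level 1 and satisfies $a *_{11} a = \top_1 *_{11} a$ for all $a \in R_1$). Then for every $n \in \mathbb{N}$ and every $x \in R_n$, $x *_{nn} x = \top_n *_{nn} x$ in $R_{2n}$. -/
namespace IgrPaper
open IgrData

/-- Multiplication on the total space `Σ n, R.C n`. -/
def sMul (R : IgrData) (x y : Σ k, R.C k) : Σ k, R.C k := ⟨x.1 + y.1, R.mul x.2 y.2⟩

lemma sigma_mk_eq (R : IgrData) {n m : ℕ} (h : n = m) {a : R.C n} {b : R.C m}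
    (h2 : HEq a b) : (⟨n, a⟩ : Σ k, R.C k) = ⟨m, b⟩ := by
  subst h; exact congrArg _ (eq_of_heq h2)

lemma sMul_assoc (R : IgrData) (hR : R.IsIgr) (x y z : Σ k, R.C k) :
    sMul R (sMul R x y) z = sMul R x (sMul R y z) := by
  obtain ⟨n, a⟩ := x; obtain ⟨m, b⟩ := y; obtain ⟨p, c⟩ := z
  exact sigma_mk_eq R (Nat.add_assoc n m p) (hR.mul_assoc a b c)

lemma sMul_comm (R : IgrData) (hR : R.IsIgr) (x y : Σ k, R.C k) :
    sMul R x y = sMul R y x := by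
  obtain ⟨n, a⟩ := x; obtain ⟨m, b⟩ := y
  exact sigma_mk_eq R (Nat.add_comm n m) (hR.mul_comm a b)

lemma sMul_mul_mul_comm (R : IgrData) (hR : R.IsIgr) (a b c d : Σ k, R.C k) :
    sMul R (sMul R a b) (sMul R c d) = sMul R (sMul R a c) (sMul R b d) := by
  rw [sMul_assoc R hR a b (sMul R c d), ← sMul_assoc R hR b c d, sMul_comm R hR b c,
    sMul_assoc R hR c b d, ← sMul_assoc R hR a c (sMul R b d)]

lemma mul_zero' (R : IgrData) (hR : R.IsIgr) {n m : ℕ} (x : R.C n) :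
    R.mul x (R.zero m) = R.zero (n + m) := by
  have h1 : R.mul x (R.zero m) = R.add (R.mul x (R.zero m)) (R.mul x (R.zero m)) := by
    conv_lhs => rw [show R.zero m = R.add (R.zero m) (R.zero m) from (hR.add_zero _).symm,
      hR.mul_add]
  have h2 := congrArg (fun t => R.add t (R.mul x (R.zero m))) h1
  rw [hR.add_self] at h2
  rw [hR.add_comm, hR.add_zero] at h2
  exact h2.symm

lemma pure_sq (R : IgrData) (hR : R.IsIgr) (hh : HCond R) :
    ∀ (n : ℕ) (x : R.C n), Pure1 R n x → R.mul x x = R.mul (R.top n) x := by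
  intro n x hx
  induction hx with
  | base a => exact hh a
  | @step n x a hx ih =>
    have key : sMul R (⟨n + 1, R.mul x a⟩ : Σ k, R.C k) ⟨n + 1, R.mul x a⟩ =
        sMul R ⟨n + 1, R.top (n + 1)⟩ ⟨n + 1, R.mul x a⟩ := by
      have hx' : (⟨n + 1, R.mul x a⟩ : Σ k, R.C k) = sMul R ⟨n, x⟩ ⟨1, a⟩ := rfl
      have e2 : sMul R (⟨n, x⟩ : Σ k, R.C k) ⟨n, x⟩ = sMul R ⟨n, R.top n⟩ ⟨n, x⟩ :=
        congrArg (Sigma.mk (n + n)) ih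
      have e3 : sMul R (⟨1, a⟩ : Σ k, R.C k) ⟨1, a⟩ = sMul R ⟨1, R.top 1⟩ ⟨1, a⟩ :=
        congrArg (Sigma.mk 2) (hh a)
      have e4 : sMul R (⟨n, R.top n⟩ : Σ k, R.C k) ⟨1, R.top 1⟩ = ⟨n + 1, R.top (n + 1)⟩ :=
        congrArg (Sigma.mk (n + 1)) (hR.top_mul_top n 1)
      rw [hx', sMul_mul_mul_comm R hR ⟨n, x⟩ ⟨1, a⟩ ⟨n, x⟩ ⟨1, a⟩, e2, e3,
        sMul_mul_mul_comm R hR ⟨n, R.top n⟩ ⟨n, x⟩ ⟨1, R.top 1⟩ ⟨1, a⟩, e4]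
    exact eq_of_heq (congr_arg_heq Sigma.snd key)

lemma gen_sq (R : IgrData) (hR : R.IsIgr) (hh : HCond R) :
    ∀ (n : ℕ) (x : R.C n), Gen1 R n x → R.mul x x = R.mul (R.top n) x := by
  intro n x hx
  induction hx with
  | pure x hx => exact pure_sq R hR hh _ x hx
  | zero => rw [mul_zero' R hR, mul_zero' R hR]
  | add x y hx hy ihx ihy =>
    have hc : R.mul y x = R.mul x y := eq_of_heq (hR.mul_comm y x)
    rw [hR.mul_add, hR.add_mul, hR.add_mul, ihx, ihy, hc, hR.mul_add]
    rw [hR.add_assoc, ← hR.add_assoc (R.mul x y), hR.add_self,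
      hR.add_comm (R.zero _), hR.add_zero]

/-- In an inductive graded ring in `Igr₊`, every homogeneous element satisfies
`x *ₙₙ x = ⊤ₙ *ₙₙ x` in `R₂ₙ`. -/
theorem stmt12 (R : IgrData) (hR : R.IsIgr) (hgen : GeneratedAt1 R) (hh : HCond R) :
    ∀ (n : ℕ) (x : R.C n), R.mul x x = R.mul (R.top n) x := by
  intro n x
  cases n with
  | zero =>
    rcases hR.level0 x with h | h <;> subst h
    · rw [mul_zero' R hR, mul_zero' R hR]
    · rfl
  | succ m => exact gen_sq R hR hh (m + 1) x (hgen (m + 1) (Nat.le_add_left 1 m) x)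

end IgrPaper
end

section
/- Let $F$ be a pre-special hyperfield. The canonical map $\phi_F: F \to \Gamma(k(F))$ determined by $\rho$ (with $\phi_F(0) = 0$ and $\phi_F$ a group isomorphism $\dot F \to \Gamma(k(F)) \setminus \{0\}$) is a morphism of hyperfields: for all $a, c, d \in F$ with $a \in c + d$, one has $\phi_F(a) \in \phi_F(c) + \phi_F(d)$. Concretely, if $a, c, d \in \dot F$ and $a \in c+d$, then $\rho_F(a)\rho_F(acd) = \rho_F(c)\rho_F(d)$ in $k_2(F)$. -/
namespace IgrPaper
open MulringData

variable {α : Type*}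

/-- The free ring on the nonzero elements of `R`, over `ℤ`. -/
abbrev KFree (R : MulringData α) : Type _ := FreeAlgebra ℤ {a : α // a ≠ R.zero}

/-- Defining relations of the K-theory ring of a hyperfield:
logarithm additivity and the Steinberg-type relation `ρ(a)ρ(b) = 0` for `b ∈ 1 - a`. -/
inductive KRel (R : MulringData α) : KFree R → KFree R → Prop
  | log (a b : {a : α // a ≠ R.zero}) (hab : R.mul a.1 b.1 ≠ R.zero) :
      KRel R (FreeAlgebra.ι ℤ (⟨R.mul a.1 b.1, hab⟩ : {a : α // a ≠ R.zero}))
        (FreeAlgebra.ι ℤ a + FreeAlgebra.ι ℤ b)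
  | steinberg (a b : {a : α // a ≠ R.zero}) (h : (b : α) ∈ R.add R.one (R.neg a.1)) :
      KRel R (FreeAlgebra.ι ℤ a * FreeAlgebra.ι ℤ b) 0

/-- The total K-theory ring `K_*F` of a hyperfield. -/
abbrev KT (R : MulringData α) : Type _ := RingQuot (KRel R)

open Classical in
/-- The generator `ρ(a) ∈ K_1 F` (with junk value `0` for `a = 0`). -/
noncomputable def kgen (R : MulringData α) (a : α) : KT R :=
  if h : a = R.zero then 0
  else RingQuot.mkRingHom (KRel R) (FreeAlgebra.ι ℤ (⟨a, h⟩ : {a : α // a ≠ R.zero}))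

/-- The `n`-th graded piece `K_n F`: the additive subgroup generated by products
of `n` generators. -/
noncomputable def Kpiece (R : MulringData α) (n : ℕ) : AddSubgroup (KT R) :=
  AddSubgroup.closure
    {x | ∃ l : List {a : α // a ≠ R.zero}, l.length = n ∧ x = (l.map fun a => kgen R a.1).prod}

/-- Defining relations of the reduced (mod 2) K-theory ring `k_*F`. -/
inductive kRel (R : MulringData α) : KFree R → KFree R → Prop
  | base (x y : KFree R) : KRel R x y → kRel R x y
  | two (x : KFree R) : kRel R (x + x) 0

/-- The reduced K-theory ring `k_*F = K_*F / 2K_*F`. -/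
abbrev kT (R : MulringData α) : Type _ := RingQuot (kRel R)

open Classical in
/-- The generator `ρ(a) ∈ k_1 F` (with junk value `0` for `a = 0`). -/
noncomputable def kgenr (R : MulringData α) (a : α) : kT R :=
  if h : a = R.zero then 0
  else RingQuot.mkRingHom (kRel R) (FreeAlgebra.ι ℤ (⟨a, h⟩ : {a : α // a ≠ R.zero}))

/-- The `n`-th graded piece `k_n F`. -/
noncomputable def kpiece (R : MulringData α) (n : ℕ) : AddSubgroup (kT R) :=
  AddSubgroup.closure
    {x | ∃ l : List {a : α // a ≠ R.zero}, l.length = n ∧ x = (l.map fun a => kgenr R a.1).prod}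

end IgrPaper

namespace IgrPaper
open MulringData


section Aux

variable {α : Type*} (R : MulringData α)

private lemma aux_helper_main {T : Type*} [Ring T] (A C D : T) (h2 : ∀ z : T, z + z = 0)
    (hAD : A * D = D * A) (hCD : C * D = D * C)
    (hst : (D + A) * (C + A) = 0) : A * (A + (C + D)) = C * D := by
  have e : A * (A + (C + D)) - C * D =
      (D + A) * (C + A) + ((A * D - D * A) - (C * D - D * C) - (D * C + D * C)) := by
    noncomm_ring
  rw [hst, hAD, hCD, h2 (D * C)] at e
  simp at e
  rw [hCD]
  exact sub_eq_zero.mp e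

private lemma aux_helper_comm {T : Type*} [Ring T] (A B E : T) (h2 : ∀ z : T, z + z = 0)
    (hA : A * A = A * E) (hB : B * B = B * E)
    (hAB : (A + B) * (A + B) = (A + B) * E) : A * B = B * A := by
  have e : A * B - B * A =
      ((A + B) * (A + B) - (A + B) * E) - (A * A - A * E) - (B * B - B * E)
        - (B * A + B * A) := by noncomm_ring
  rw [hA, hB, hAB, h2 (B * A)] at e
  simp at e
  exact sub_eq_zero.mp e

variable (hR : R.IsPreSpecialHF)
include hR

private lemma aux_mul_ne_zero {a b : α} (ha : a ≠ R.zero) (hb : b ≠ R.zero) :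
    R.mul a b ≠ R.zero := by
  intro h
  apply hb
  have hM := hR.1.toIsMultiringOn
  have h1 : R.mul a (R.mul a b) = R.zero := by rw [h]; exact hM.mul_zero a (Set.mem_univ _)
  rw [← hM.mul_assoc a (Set.mem_univ _) a (Set.mem_univ _) b (Set.mem_univ _),
    hR.2.2.1 a ha, hM.one_mul b (Set.mem_univ _)] at h1
  exact h1

private lemma aux_neg_zero : R.neg R.zero = R.zero := by
  have hM := hR.1.toIsMultiringOn
  have h0 : R.zero ∈ R.add R.zero R.zero :=
    (hM.zero_add R.zero (Set.mem_univ _) R.zero (Set.mem_univ _)).mpr rfl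
  have := hM.reverse R.zero (Set.mem_univ _) R.zero (Set.mem_univ _) R.zero (Set.mem_univ _) h0
  exact ((hM.zero_add R.zero (Set.mem_univ _) (R.neg R.zero) (Set.mem_univ _)).mp this).symm

private lemma aux_zero_mem_sub (a : α) : R.zero ∈ R.add a (R.neg a) := by
  have hM := hR.1.toIsMultiringOn
  have h0 : a ∈ R.add R.zero a :=
    (hM.zero_add a (Set.mem_univ _) a (Set.mem_univ _)).mpr rfl
  exact hM.reverse R.zero (Set.mem_univ _) a (Set.mem_univ _) a (Set.mem_univ _) h0

private lemma aux_neg_neg (a : α) : R.neg (R.neg a) = a := by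
  have hM := hR.1.toIsMultiringOn
  have := hM.reverse a (Set.mem_univ _) (R.neg a) (Set.mem_univ _) R.zero (Set.mem_univ _)
    (aux_zero_mem_sub R hR a)
  exact ((hM.zero_add a (Set.mem_univ _) (R.neg (R.neg a)) (Set.mem_univ _)).mp this).symm

private lemma aux_neg_ne_zero {a : α} (ha : a ≠ R.zero) : R.neg a ≠ R.zero := by
  intro h
  apply ha
  rw [← aux_neg_neg R hR a, h, aux_neg_zero R hR]

private lemma aux_neg_mul (b d : α) : R.mul (R.neg b) d = R.neg (R.mul b d) := by
  have hM := hR.1.toIsMultiringOn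
  have h0 : R.mul R.zero d ∈ R.add (R.mul b d) (R.mul (R.neg b) d) :=
    hM.distrib b (Set.mem_univ _) (R.neg b) (Set.mem_univ _) R.zero (Set.mem_univ _)
      d (Set.mem_univ _) (aux_zero_mem_sub R hR b)
  rw [hM.mul_comm R.zero (Set.mem_univ _) d (Set.mem_univ _),
    hM.mul_zero d (Set.mem_univ _)] at h0
  have := hM.reverse (R.mul b d) (Set.mem_univ _) (R.mul (R.neg b) d) (Set.mem_univ _)
    R.zero (Set.mem_univ _) h0
  have heq := (hM.zero_add (R.mul b d) (Set.mem_univ _) (R.neg (R.mul (R.neg b) d))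
    (Set.mem_univ _)).mp this
  rw [← aux_neg_neg R hR (R.mul (R.neg b) d), ← heq]

private lemma aux_one_mem_sub {a : α} (ha : a ≠ R.zero) :
    R.one ∈ R.add a (R.neg a) := by
  have hM := hR.1.toIsMultiringOn
  have he := hR.1.distrib_eq R.one (Set.mem_univ _) (R.neg R.one) (Set.mem_univ _)
    a (Set.mem_univ _)
  rw [hR.2.1] at he
  have h1 : R.one ∈ (fun x => R.mul x a) '' Set.univ :=
    ⟨a, Set.mem_univ _, hR.2.2.1 a ha⟩
  rw [he, hM.one_mul a (Set.mem_univ _), aux_neg_mul R hR,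
    hM.one_mul a (Set.mem_univ _)] at h1
  exact h1

private lemma aux_neg_mem_one_sub {a : α} (ha : a ≠ R.zero) :
    R.neg a ∈ R.add R.one (R.neg a) := by
  have hM := hR.1.toIsMultiringOn
  have h1 : R.one ∈ R.add (R.neg a) a := by
    rw [← hM.add_comm a (Set.mem_univ _) (R.neg a) (Set.mem_univ _)]
    exact aux_one_mem_sub R hR ha
  have := hM.reverse (R.neg a) (Set.mem_univ _) a (Set.mem_univ _) R.one (Set.mem_univ _) h1
  exact this

omit hR

private lemma aux_two (z : kT R) : z + z = 0 := by
  obtain ⟨x, rfl⟩ := RingQuot.mkRingHom_surjective (kRel R) z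
  rw [← map_add]
  calc RingQuot.mkRingHom (kRel R) (x + x)
      = RingQuot.mkRingHom (kRel R) 0 := RingQuot.mkRingHom_rel (kRel.two x)
    _ = 0 := map_zero _

private lemma aux_kgenr_eq {a : α} (ha : a ≠ R.zero) :
    kgenr R a = RingQuot.mkRingHom (kRel R)
      (FreeAlgebra.ι ℤ (⟨a, ha⟩ : {a : α // a ≠ R.zero})) := by
  simp [kgenr, ha]

include hR

private lemma aux_log {a b : α} (ha : a ≠ R.zero) (hb : b ≠ R.zero) :
    kgenr R (R.mul a b) = kgenr R a + kgenr R b := by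
  have hab := aux_mul_ne_zero R hR ha hb
  rw [aux_kgenr_eq R hab, aux_kgenr_eq R ha, aux_kgenr_eq R hb, ← map_add]
  exact RingQuot.mkRingHom_rel (kRel.base _ _ (KRel.log ⟨a, ha⟩ ⟨b, hb⟩ hab))

omit hR

private lemma aux_steinberg {a b : α} (ha : a ≠ R.zero) (hb : b ≠ R.zero)
    (h : b ∈ R.add R.one (R.neg a)) :
    kgenr R a * kgenr R b = 0 := by
  rw [aux_kgenr_eq R ha, aux_kgenr_eq R hb, ← map_mul]
  calc RingQuot.mkRingHom (kRel R) (FreeAlgebra.ι ℤ ⟨a, ha⟩ * FreeAlgebra.ι ℤ ⟨b, hb⟩)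
      = RingQuot.mkRingHom (kRel R) 0 :=
        RingQuot.mkRingHom_rel (kRel.base _ _ (KRel.steinberg ⟨a, ha⟩ ⟨b, hb⟩ h))
    _ = 0 := map_zero _

include hR

private lemma aux_rho_neg_self {a : α} (ha : a ≠ R.zero) :
    kgenr R a * kgenr R (R.neg a) = 0 :=
  aux_steinberg R ha (aux_neg_ne_zero R hR ha) (aux_neg_mem_one_sub R hR ha)

private lemma aux_sq_eq {a : α} (ha : a ≠ R.zero) :
    kgenr R a * kgenr R a = kgenr R a * kgenr R (R.neg R.one) := by
  have hM := hR.1.toIsMultiringOn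
  have h1 : R.one ≠ R.zero := hR.1.one_ne_zero
  have hn1 : R.neg R.one ≠ R.zero := aux_neg_ne_zero R hR h1
  have hmul : R.mul (R.neg R.one) a = R.neg a := by
    rw [aux_neg_mul R hR, hM.one_mul a (Set.mem_univ _)]
  have hlog : kgenr R (R.neg a) = kgenr R (R.neg R.one) + kgenr R a := by
    rw [← hmul]; exact aux_log R hR hn1 ha
  have h0 := aux_rho_neg_self R hR ha
  rw [hlog, mul_add] at h0
  have := congrArg (fun z => z + kgenr R a * kgenr R (R.neg R.one)) h0
  simp only [zero_add] at this
  rw [add_comm, ← add_assoc, aux_two R (kgenr R a * kgenr R (R.neg R.one)), zero_add] at this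
  exact this

private lemma aux_comm {a b : α} (ha : a ≠ R.zero) (hb : b ≠ R.zero) :
    kgenr R a * kgenr R b = kgenr R b * kgenr R a := by
  have hab := aux_mul_ne_zero R hR ha hb
  have hAB : kgenr R (R.mul a b) = kgenr R a + kgenr R b := aux_log R hR ha hb
  refine aux_helper_comm (kgenr R a) (kgenr R b) (kgenr R (R.neg R.one)) (aux_two R)
    (aux_sq_eq R hR ha) (aux_sq_eq R hR hb) ?_
  rw [← hAB]
  exact aux_sq_eq R hR hab

end Aux

/-- For a pre-special hyperfield `F`, the canonical map `φ_F : F → Γ(k(F))` is a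
morphism of hyperfields: if `a ∈ c + d` (all nonzero) then
`ρ(a)ρ(acd) = ρ(c)ρ(d)` in `k₂(F)`; equivalently `φ_F(a) ∈ φ_F(c) + φ_F(d)`,
i.e. there is `w` with `cd = aw` and `ρ(c)ρ(d) = ρ(a)ρ(w)`. -/
theorem stmt15 {α : Type*} (R : MulringData α) (hR : R.IsPreSpecialHF)
    (a c d : α) (ha : a ≠ R.zero) (hc : c ≠ R.zero) (hd : d ≠ R.zero)
    (hmem : a ∈ R.add c d) :
    kgenr R a * kgenr R (R.mul a (R.mul c d)) = kgenr R c * kgenr R d ∧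
    ∃ w : α, w ≠ R.zero ∧ R.mul c d = R.mul a w ∧
      kgenr R c * kgenr R d = kgenr R a * kgenr R w := by
  have hM := hR.1.toIsMultiringOn
  have hcd := aux_mul_ne_zero R hR hc hd
  have hw := aux_mul_ne_zero R hR ha hcd
  -- ρ(a(cd)) = ρa + (ρc + ρd)
  have hexp : kgenr R (R.mul a (R.mul c d)) = kgenr R a + (kgenr R c + kgenr R d) := by
    rw [aux_log R hR ha hcd, aux_log R hR hc hd]
  -- Steinberg input: c ∈ a - d, then multiply by a:  ca ∈ 1 - da
  have h1 : c ∈ R.add a (R.neg d) :=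
    hM.reverse c (Set.mem_univ _) d (Set.mem_univ _) a (Set.mem_univ _) hmem
  have h2 : R.mul c a ∈ R.add (R.mul a a) (R.mul (R.neg d) a) :=
    hM.distrib a (Set.mem_univ _) (R.neg d) (Set.mem_univ _) c (Set.mem_univ _)
      a (Set.mem_univ _) h1
  rw [hR.2.2.1 a ha, aux_neg_mul R hR] at h2
  have hda := aux_mul_ne_zero R hR hd ha
  have hca := aux_mul_ne_zero R hR hc ha
  have hst := aux_steinberg R hda hca h2
  rw [aux_log R hR hd ha, aux_log R hR hc ha] at hst
  have hmain : kgenr R a * kgenr R (R.mul a (R.mul c d)) = kgenr R c * kgenr R d := by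
    rw [hexp]
    refine aux_helper_main (kgenr R a) (kgenr R c) (kgenr R d) (aux_two R)
      (aux_comm R hR ha hd) (aux_comm R hR hc hd) ?_
    have : (kgenr R d + kgenr R a) * (kgenr R c + kgenr R a) = 0 := hst
    exact this
  refine ⟨hmain, R.mul a (R.mul c d), hw, ?_, ?_⟩
  · rw [← hM.mul_assoc a (Set.mem_univ _) a (Set.mem_univ _) (R.mul c d) (Set.mem_univ _),
      hR.2.2.1 a ha, hM.one_mul (R.mul c d) (Set.mem_univ _)]
  · exact hmain.symm

end IgrPaper
end

section
/- Let $F$ be a hyperbolic hyperfield and $\varphi: F \to L$ a morphism of hyperfields. Then $\varphi$ induces a morphism of graded rings $\varphi_* = \{\varphi_n\}: K_* F \to K_* L$ with $\varphi_0 = \mathrm{id}_{\mathbb{Z}}$ and $\varphi_n(\rho(a_1)\cdots\rho(a_n)) = \rho(\varphi(a_1))\cdots\rho(\varphi(a_n))$ on generators; moreover $(\psi \circ \varphi)_* = \psi_* \circ \varphi_*$, $(\mathrm{id})_* = \mathrm{id}$, and if $\varphi$ is surjective then so is each $\varphi_n$. -/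
/-!
The relations defining `K_*F` are `ρ(ab) = ρ(a) + ρ(b)` and `ρ(a)ρ(b) = 0` for `b ∈ 1 - a`.
A morphism `φ` sends nonzero elements to nonzero elements (they are invertible), is
multiplicative, and maps `b ∈ 1 - a` to `φ b ∈ 1 - φ a`; hence `ρ(a) ↦ ρ(φ a)` respects both
relations and descends to a ring homomorphism `φ_*`. Everything else follows because the
`ρ(a)` generate `K_*F` as a ring: this gives uniqueness, functoriality and surjectivity, and
`φ_*` sends a product of `n` generators to a product of `n` generators.
-/

namespace IgrPaper
open MulringData

namespace MulringData

variable {α β : Type*}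

theorem IsMultiring.zero_mul {S : MulringData β} (hS : S.IsMultiring) (b : β) :
    S.mul S.zero b = S.zero := by
  rw [hS.mul_comm _ trivial _ trivial, hS.mul_zero _ trivial]

theorem IsHFMorphism.map_ne_zero {R : MulringData α} {S : MulringData β} {φ : α → β}
    (hφ : IsHFMorphism R S φ) (hR : R.IsHyperfield) (hS : S.IsMultiring)
    (hS₁ : S.one ≠ S.zero) {a : α} (ha : a ≠ R.zero) : φ a ≠ S.zero := by
  obtain ⟨b, -, hab⟩ := hR.exists_inv a trivial ha
  intro hφa
  have := hφ.map_mul a trivial b trivial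
  rw [hab, hφ.map_one, hφa, hS.zero_mul] at this
  exact hS₁ this

theorem IsHFMorphism.map_mem_one_sub {R : MulringData α} {S : MulringData β} {φ : α → β}
    (hφ : IsHFMorphism R S φ) {a b : α} (h : b ∈ R.add R.one (R.neg a)) :
    φ b ∈ S.add S.one (S.neg (φ a)) := by
  simpa only [hφ.map_one, hφ.map_neg a trivial] using
    hφ.map_add R.one trivial (R.neg a) trivial b trivial h

end MulringData

section KTheory

variable {α β : Type*}

theorem kgen_of_ne_zero (R : MulringData α) {a : α} (ha : a ≠ R.zero) :
    kgen R a = RingQuot.mkRingHom (KRel R) (FreeAlgebra.ι ℤ ⟨a, ha⟩) :=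
  dif_neg ha

@[simp]
theorem kgen_zero (R : MulringData α) : kgen R R.zero = 0 :=
  dif_pos rfl

theorem kgen_mul (R : MulringData α) {a b : α} (ha : a ≠ R.zero) (hb : b ≠ R.zero)
    (hab : R.mul a b ≠ R.zero) : kgen R (R.mul a b) = kgen R a + kgen R b := by
  rw [kgen_of_ne_zero R hab, kgen_of_ne_zero R ha, kgen_of_ne_zero R hb, ← map_add]
  exact RingQuot.mkRingHom_rel (KRel.log ⟨a, ha⟩ ⟨b, hb⟩ hab)

theorem kgen_mul_kgen_of_mem_one_sub (R : MulringData α) {a b : α}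
    (h : b ∈ R.add R.one (R.neg a)) : kgen R a * kgen R b = 0 := by
  by_cases ha : a = R.zero
  · rw [ha, kgen_zero, zero_mul]
  by_cases hb : b = R.zero
  · rw [hb, kgen_zero, mul_zero]
  rw [kgen_of_ne_zero R ha, kgen_of_ne_zero R hb, ← map_mul, ← map_zero (RingQuot.mkRingHom _)]
  exact RingQuot.mkRingHom_rel (KRel.steinberg ⟨a, ha⟩ ⟨b, hb⟩ h)

theorem closure_range_kgen (R : MulringData α) : Subring.closure (Set.range (kgen R)) = ⊤ := by
  rw [eq_top_iff]
  rintro y -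
  obtain ⟨x, rfl⟩ := RingQuot.mkRingHom_surjective (KRel R) y
  induction x using FreeAlgebra.induction with
  | grade0 r =>
    rw [eq_intCast (algebraMap ℤ (KFree R)), map_intCast]
    exact intCast_mem _ r
  | grade1 a => exact Subring.subset_closure ⟨a.1, kgen_of_ne_zero R a.2⟩
  | mul x y hx hy => simpa only [map_mul] using mul_mem hx hy
  | add x y hx hy => simpa only [map_add] using add_mem hx hy

theorem KT.hom_ext {R : MulringData α} {T : Type*} [Ring T] {f g : KT R →+* T}
    (h : ∀ a : α, f (kgen R a) = g (kgen R a)) : f = g := by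
  have hEq : Set.EqOn f g (Subring.closure (Set.range (kgen R))) :=
    RingHom.eqOn_set_closure (Set.forall_mem_range.2 h)
  rw [closure_range_kgen] at hEq
  exact RingHom.ext fun x => hEq trivial

section Map

variable (R : MulringData α) (S : MulringData β) (φ : α → β)

noncomputable def KT.map (hR : R.IsHyperfield) (hS : S.IsHyperfield)
    (hφ : IsHFMorphism R S φ) : KT R →+* KT S :=
  RingQuot.lift
    ⟨(FreeAlgebra.lift ℤ fun a : {a : α // a ≠ R.zero} => kgen S (φ a.1)).toRingHom, by
      intro x y hxy
      induction hxy with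
      | log a b hab =>
        have hne := fun {c : α} => hφ.map_ne_zero hR hS.toIsMultiringOn hS.one_ne_zero (a := c)
        simp only [AlgHom.toRingHom_eq_coe, RingHom.coe_coe, map_add, FreeAlgebra.lift_ι_apply,
          hφ.map_mul a.1 trivial b.1 trivial]
        exact kgen_mul S (hne a.2) (hne b.2) (hφ.map_mul a.1 trivial b.1 trivial ▸ hne hab)
      | steinberg a b h =>
        simpa only [AlgHom.toRingHom_eq_coe, RingHom.coe_coe, map_mul, map_zero,
          FreeAlgebra.lift_ι_apply] using kgen_mul_kgen_of_mem_one_sub S (hφ.map_mem_one_sub h)⟩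

theorem KT.map_kgen (hR : R.IsHyperfield) (hS : S.IsHyperfield) (hφ : IsHFMorphism R S φ)
    (a : α) : KT.map R S φ hR hS hφ (kgen R a) = kgen S (φ a) := by
  by_cases ha : a = R.zero
  · rw [ha, kgen_zero, map_zero, hφ.map_zero, kgen_zero]
  · rw [kgen_of_ne_zero R ha, KT.map, RingQuot.lift_mkRingHom_apply]
    exact FreeAlgebra.lift_ι_apply _ _

variable {R S φ}

theorem KT.mapsTo_Kpiece {Φ : KT R →+* KT S} (hΦ : ∀ a : α, Φ (kgen R a) = kgen S (φ a))
    (hne : ∀ a, a ≠ R.zero → φ a ≠ S.zero) (n : ℕ) :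
    Set.MapsTo Φ (Kpiece R n) (Kpiece S n) := by
  show Kpiece R n ≤ (Kpiece S n).comap Φ.toAddMonoidHom
  refine AddSubgroup.closure_le _ |>.2 ?_
  rintro _ ⟨l, rfl, rfl⟩
  refine AddSubgroup.subset_closure ⟨l.map fun a => ⟨φ a.1, hne a.1 a.2⟩, List.length_map _, ?_⟩
  simp only [RingHom.toAddMonoidHom_eq_coe, AddMonoidHom.coe_coe, map_list_prod, List.map_map]
  exact congrArg List.prod (List.map_congr_left fun a _ => hΦ a.1)

theorem KT.surjective_of_surjective {Φ : KT R →+* KT S}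
    (hΦ : ∀ a : α, Φ (kgen R a) = kgen S (φ a)) (hφ : Function.Surjective φ) :
    Function.Surjective Φ := by
  have hle : Subring.closure (Set.range (kgen S)) ≤ Φ.range := by
    refine Subring.closure_le.2 ?_
    rintro _ ⟨b, rfl⟩
    obtain ⟨a, rfl⟩ := hφ b
    exact ⟨kgen R a, hΦ a⟩
  rw [closure_range_kgen, top_le_iff] at hle
  exact RingHom.range_eq_top.1 hle

end Map

end KTheory

theorem stmt16_general {α β : Type*} (R : MulringData α) (S : MulringData β)
    (hR : R.IsHyperfield) (hS : S.IsHyperfield)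
    (φ : α → β) (hφ : IsHFMorphism R S φ) :
    (∃! Φ : KT R →+* KT S, ∀ a : α, Φ (kgen R a) = kgen S (φ a)) ∧
    (∀ Φ : KT R →+* KT S, (∀ a : α, Φ (kgen R a) = kgen S (φ a)) →
      (∀ n, Set.MapsTo Φ (Kpiece R n) (Kpiece S n)) ∧
      (Function.Surjective φ → Function.Surjective Φ)) ∧
    (∀ Φ : KT R →+* KT R, (∀ a : α, Φ (kgen R a) = kgen R a) → Φ = RingHom.id _) ∧
    (∀ (γ : Type*) (Q : MulringData γ) (_hQ : Q.IsHyperfield) (ψ : β → γ),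
      IsHFMorphism S Q ψ →
      ∀ (Φ : KT R →+* KT S) (Ψ : KT S →+* KT Q),
        (∀ a : α, Φ (kgen R a) = kgen S (φ a)) →
        (∀ b : β, Ψ (kgen S b) = kgen Q (ψ b)) →
        ∀ a : α, Ψ (Φ (kgen R a)) = kgen Q (ψ (φ a))) := by
  refine ⟨⟨KT.map R S φ hR hS hφ, KT.map_kgen R S φ hR hS hφ, fun Φ hΦ =>
      KT.hom_ext fun a => (hΦ a).trans (KT.map_kgen R S φ hR hS hφ a).symm⟩,
    fun Φ hΦ => ⟨KT.mapsTo_Kpiece hΦ fun _ =>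
      hφ.map_ne_zero hR hS.toIsMultiringOn hS.one_ne_zero, KT.surjective_of_surjective hΦ⟩,
    fun Φ hΦ => KT.hom_ext hΦ, ?_⟩
  intro γ Q _hQ ψ _hψ Φ Ψ hΦ hΨ a
  rw [hΦ a, hΨ (φ a)]

/-- Functoriality of K-theory: a morphism of hyperbolic hyperfields `φ : F → L`
induces a unique (graded) ring homomorphism `φ_* : K_*F → K_*L` sending
`ρ(a) ↦ ρ(φ a)`; it preserves the grading, is compatible with composition and
identities, and is surjective whenever `φ` is surjective. -/
theorem stmt16 {α β : Type*} (R : MulringData α) (S : MulringData β)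
    (hR : R.IsHyperfield) (hRhyp : R.IsHyperbolic) (hS : S.IsHyperfield)
    (φ : α → β) (hφ : IsHFMorphism R S φ) :
    (∃! Φ : KT R →+* KT S, ∀ a : α, Φ (kgen R a) = kgen S (φ a)) ∧
    (∀ Φ : KT R →+* KT S, (∀ a : α, Φ (kgen R a) = kgen S (φ a)) →
      (∀ n, Set.MapsTo Φ (Kpiece R n) (Kpiece S n)) ∧
      (Function.Surjective φ → Function.Surjective Φ)) ∧
    (∀ Φ : KT R →+* KT R, (∀ a : α, Φ (kgen R a) = kgen R a) → Φ = RingHom.id _) ∧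
    (∀ (γ : Type*) (Q : MulringData γ) (_hQ : Q.IsHyperfield) (ψ : β → γ),
      IsHFMorphism S Q ψ →
      ∀ (Φ : KT R →+* KT S) (Ψ : KT S →+* KT Q),
        (∀ a : α, Φ (kgen R a) = kgen S (φ a)) →
        (∀ b : β, Ψ (kgen S b) = kgen Q (ψ b)) →
        ∀ a : α, Ψ (Φ (kgen R a)) = kgen Q (ψ (φ a))) :=
  stmt16_general R S hR hS φ hφ

end IgrPaper
end
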